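/- arXiv:2309.09124 — 11 statements merged into one kernel-verified Lean document; each statement's English description precedes it below -/
import Mathlib

section
/- Let q be a prime power, χ a nontrivial multiplicative character of F_q (extended by χ(0)=0), λ ∈ F_q^*, and A, B nonempty subsets of F_q^*. Then |∑_{a∈A} ∑_{b∈B} χ(ab+λ)| ≤ √(q·|A|·|B|) · √(1 − max(|A|,|B|)/q). -/
/-!
Put `S a = ∑ b ∈ B, χ (a * b + lam)`. For `b, b' ≠ 0` the correlation
`∑ a, χ (a * b + lam) * conj χ (a * b' + lam)` is `q - 1` if `b = b'` and `-χ b * conj χ b'`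
otherwise (after rescaling, the Jacobi sum `J(χ, χ⁻¹) = -χ (-1)`). Hence
`∑ a, ‖S a‖² = q * #B - ‖∑ b ∈ B, χ b‖² ≤ q * #B`, and removing the term `‖S 0‖² = #B²` bounds the
sum over `a ∈ A ⊆ Fˣ` by `#B * (q - #B)`. Cauchy–Schwarz over `A` gives
`‖∑ a ∈ A, S a‖² ≤ #A * #B * (q - #B)`, and the same with `A` and `B` exchanged.
-/

open Finset

namespace MulChar

section

variable {F R : Type*} [Field F] [CommRing R] (χ : MulChar F R)

lemma apply_mul_inv_apply {y : F} (hy : y ≠ 0) : χ y * χ⁻¹ y = 1 := by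
  rw [inv_apply', ← map_mul, mul_inv_cancel₀ hy, map_one]

variable [Fintype F]

lemma sum_apply_mul_inv_apply : ∑ x, χ x * χ⁻¹ x = Fintype.card F - 1 := by
  classical
  rw [Fintype.card_eq_card_units_add_one (α := F), Nat.cast_add, Nat.cast_one,
    add_sub_cancel_right, ← sum_one_eq_card_units, ← mul_inv_cancel χ]
  rfl

variable [IsDomain R]

lemma sum_apply_add_mul_inv_apply (hχ : χ ≠ 1) {c : F} (hc : c ≠ 0) :
    ∑ x, χ (x + c) * χ⁻¹ x = -1 := by
  -- substituting `x = -c * y` turns the sum into `χ (-1) * jacobiSum χ⁻¹ χ`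
  rw [← (mulLeft_bijective₀ (-c) (neg_ne_zero.mpr hc)).sum_comp]
  have hterm (y : F) : χ (-c * y + c) * χ⁻¹ (-c * y) = χ (-1) * (χ⁻¹ y * χ (1 - y)) := by
    rw [show -c * y + c = c * (1 - y) by ring, show -c * y = c * (-1) * y by ring,
      map_mul, map_mul, map_mul, inv_apply' χ (-1), inv_neg_one]
    linear_combination (χ (1 - y) * χ⁻¹ y * χ (-1)) * χ.apply_mul_inv_apply hc
  simp only [hterm, ← mul_sum]
  rw [← jacobiSum, jacobiSum_comm, jacobiSum_nontrivial_inv hχ, mul_neg, ← map_mul,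
    neg_one_mul, neg_neg, map_one]

lemma sum_apply_add_mul_inv_apply_add [DecidableEq F] (hχ : χ ≠ 1) (u v : F) :
    ∑ x, χ (x + u) * χ⁻¹ (x + v) = (if u = v then (Fintype.card F : R) else 0) - 1 := by
  rw [← (Equiv.subRight v).sum_comp]
  simp only [Equiv.subRight_apply, sub_add_cancel, sub_add_eq_add_sub, add_sub_assoc]
  split_ifs with h
  · simp only [h, sub_self, add_zero, sum_apply_mul_inv_apply]
  · rw [sum_apply_add_mul_inv_apply χ hχ (sub_ne_zero.mpr h), zero_sub]

lemma sum_apply_mul_add_mul_inv_apply_mul_add [DecidableEq F] (hχ : χ ≠ 1) {lam : F}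
    (hlam : lam ≠ 0) {b b' : F} (hb : b ≠ 0) (hb' : b' ≠ 0) :
    ∑ a, χ (a * b + lam) * χ⁻¹ (a * b' + lam)
      = (if b = b' then (Fintype.card F : R) else 0) - χ b * χ⁻¹ b' := by
  have hfactor {c : F} (hc : c ≠ 0) (a : F) : a * c + lam = c * (a + lam / c) := by
    field_simp
  have hshift : lam / b = lam / b' ↔ b = b' := by
    simp only [div_eq_mul_inv, mul_right_inj' hlam, inv_inj]
  calc ∑ a, χ (a * b + lam) * χ⁻¹ (a * b' + lam)
      = χ b * χ⁻¹ b' * ∑ a, χ (a + lam / b) * χ⁻¹ (a + lam / b') := by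
        simp only [hfactor hb, hfactor hb', map_mul, mul_sum]
        exact sum_congr rfl fun a _ ↦ by ring
    _ = _ := by
        simp only [sum_apply_add_mul_inv_apply_add χ hχ, hshift]
        split_ifs with h
        · rw [← h, χ.apply_mul_inv_apply hb, one_mul]
        · ring

end

section Complex

variable {F : Type*} [Field F] [Fintype F] (χ : MulChar F ℂ)

lemma ofReal_norm_sum_apply_sq {ι : Type*} (s : Finset ι) (f : ι → F) :
    (‖∑ i ∈ s, χ (f i)‖ : ℂ) ^ 2 = (∑ i ∈ s, χ (f i)) * ∑ i ∈ s, χ⁻¹ (f i) := by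
  simp only [← Complex.mul_conj', map_sum, starRingEnd_apply, star_apply']

lemma sum_norm_sum_apply_mul_add_sq (hχ : χ ≠ 1) {lam : F} (hlam : lam ≠ 0) {B : Finset F}
    (hB0 : (0 : F) ∉ B) :
    ∑ a, ‖∑ b ∈ B, χ (a * b + lam)‖ ^ 2 = Fintype.card F * #B - ‖∑ b ∈ B, χ b‖ ^ 2 := by
  classical
  have hB (b : F) (hb : b ∈ B) : b ≠ 0 := ne_of_mem_of_not_mem hb hB0
  apply Complex.ofReal_injective
  push_cast
  have hrhs : (‖∑ b ∈ B, χ b‖ : ℂ) ^ 2 = (∑ b ∈ B, χ b) * ∑ b ∈ B, χ⁻¹ b :=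
    χ.ofReal_norm_sum_apply_sq B id
  simp only [ofReal_norm_sum_apply_sq, hrhs, sum_mul_sum]
  rw [sum_comm]
  calc ∑ b ∈ B, ∑ a, ∑ b' ∈ B, χ (a * b + lam) * χ⁻¹ (a * b' + lam)
      = ∑ b ∈ B, ∑ b' ∈ B, ((if b = b' then (Fintype.card F : ℂ) else 0) - χ b * χ⁻¹ b') :=
        sum_congr rfl fun b hb ↦ by
          rw [sum_comm]
          exact sum_congr rfl fun b' hb' ↦
            χ.sum_apply_mul_add_mul_inv_apply_mul_add hχ hlam (hB b hb) (hB b' hb')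
    _ = _ := by simp [sum_sub_distrib, mul_comm]

lemma sum_norm_sum_apply_mul_add_sq_le (hχ : χ ≠ 1) {lam : F} (hlam : lam ≠ 0)
    {A B : Finset F} (hA0 : (0 : F) ∉ A) (hB0 : (0 : F) ∉ B) :
    ∑ a ∈ A, ‖∑ b ∈ B, χ (a * b + lam)‖ ^ 2 ≤ #B * (Fintype.card F - #B) := by
  classical
  have hzero : ‖∑ b ∈ B, χ (0 * b + lam)‖ ^ 2 = (#B : ℝ) ^ 2 := by
    apply Complex.ofReal_injective
    push_cast
    rw [ofReal_norm_sum_apply_sq]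
    simp only [zero_mul, zero_add, sum_const, nsmul_eq_mul]
    linear_combination (#B : ℂ) ^ 2 * χ.apply_mul_inv_apply hlam
  calc ∑ a ∈ A, ‖∑ b ∈ B, χ (a * b + lam)‖ ^ 2
      = ∑ a ∈ insert 0 A, ‖∑ b ∈ B, χ (a * b + lam)‖ ^ 2 - #B ^ 2 := by
        rw [sum_insert hA0, hzero, add_sub_cancel_left]
    _ ≤ ∑ a, ‖∑ b ∈ B, χ (a * b + lam)‖ ^ 2 - #B ^ 2 := by
        gcongr
        exact subset_univ _
    _ = Fintype.card F * #B - ‖∑ b ∈ B, χ b‖ ^ 2 - #B ^ 2 := by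
        rw [χ.sum_norm_sum_apply_mul_add_sq hχ hlam hB0]
    _ ≤ #B * (Fintype.card F - #B) := by
        nlinarith [sq_nonneg ‖∑ b ∈ B, χ b‖]

lemma norm_sum_sum_apply_mul_add_sq_le (hχ : χ ≠ 1) {lam : F} (hlam : lam ≠ 0)
    {A B : Finset F} (hA0 : (0 : F) ∉ A) (hB0 : (0 : F) ∉ B) :
    ‖∑ a ∈ A, ∑ b ∈ B, χ (a * b + lam)‖ ^ 2 ≤ #A * #B * (Fintype.card F - #B) :=
  calc ‖∑ a ∈ A, ∑ b ∈ B, χ (a * b + lam)‖ ^ 2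
      ≤ (∑ a ∈ A, ‖∑ b ∈ B, χ (a * b + lam)‖) ^ 2 := by gcongr; exact norm_sum_le _ _
    _ ≤ #A * ∑ a ∈ A, ‖∑ b ∈ B, χ (a * b + lam)‖ ^ 2 := sq_sum_le_card_mul_sum_sq
    _ ≤ #A * (#B * (Fintype.card F - #B)) := by
        gcongr; exact χ.sum_norm_sum_apply_mul_add_sq_le hχ hlam hA0 hB0
    _ = #A * #B * (Fintype.card F - #B) := by ring

end Complex

end MulChar

theorem charsum_double_estimate_general
    (F : Type*) [Field F] [Fintype F]
    (χ : MulChar F ℂ) (hχ : χ ≠ 1)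
    (lam : F) (hlam : lam ≠ 0)
    (A B : Finset F)
    (hA0 : (0 : F) ∉ A) (hB0 : (0 : F) ∉ B) :
    ‖∑ a ∈ A, ∑ b ∈ B, χ (a * b + lam)‖ ≤
      Real.sqrt ((Fintype.card F : ℝ) * A.card * B.card) *
        Real.sqrt (1 - (max A.card B.card : ℝ) / (Fintype.card F : ℝ)) := by
  have hswap : ∑ a ∈ A, ∑ b ∈ B, χ (a * b + lam) = ∑ b ∈ B, ∑ a ∈ A, χ (b * a + lam) := by
    rw [sum_comm]
    simp only [mul_comm]
  have hsq : ‖∑ a ∈ A, ∑ b ∈ B, χ (a * b + lam)‖ ^ 2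
      ≤ #A * #B * (Fintype.card F - max (#A : ℝ) #B) := by
    rcases le_total #A #B with h | h
    · rw [max_eq_right (by exact_mod_cast h)]
      exact χ.norm_sum_sum_apply_mul_add_sq_le hχ hlam hA0 hB0
    · rw [max_eq_left (by exact_mod_cast h), hswap, mul_comm (#A : ℝ)]
      exact χ.norm_sum_sum_apply_mul_add_sq_le hχ hlam hB0 hA0
  rw [← Real.sqrt_mul (by positivity)]
  refine Real.le_sqrt_of_sq_le (hsq.trans_eq ?_)
  field_simp

/-- double character sum estimate (Proposition on charsum:sym). -/
theorem charsum_double_estimate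
    (F : Type*) [Field F] [Fintype F] [DecidableEq F]
    (χ : MulChar F ℂ) (hχ : χ ≠ 1)
    (lam : F) (hlam : lam ≠ 0)
    (A B : Finset F) (hA : A.Nonempty) (hB : B.Nonempty)
    (hA0 : (0 : F) ∉ A) (hB0 : (0 : F) ∉ B) :
    ‖∑ a ∈ A, ∑ b ∈ B, χ (a * b + lam)‖ ≤
      Real.sqrt ((Fintype.card F : ℝ) * A.card * B.card) *
        Real.sqrt (1 - (max A.card B.card : ℝ) / (Fintype.card F : ℝ)) :=
  charsum_double_estimate_general F χ hχ lam hlam A B hA0 hB0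
end

section
/- Let d ≥ 2 and let q ≡ 1 (mod d) be a prime power. Let λ ∈ F_q^* and let A ⊆ F_q^* be a set such that for all a, b ∈ A (including a = b), the element ab + λ is either 0 or a d-th power in F_q^*. Then |A| ≤ (√(4q−3) + 1)/2. -/
/-!
Take a multiplicative character `χ : F → ℂ` of exact order `d`, so `χ (a * b + λ) = 1` whenever
`a * b + λ ≠ 0`, and put `T c = ∑ b ∈ A, χ (b + c)`. Orthogonality gives
`∑ c, ‖T c‖² = n q - n²` with `n = #A`. At the `n` distinct points `c = λ / a` (`a ∈ A`),
`T c = χ a⁻¹ · #{b ∈ A | a b + λ ≠ 0}`, so `‖T c‖ ≥ n - 1`. Hence `n (n - 1)² ≤ n q - n²`,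
i.e. `(2n - 1)² ≤ 4q - 3`.
-/

open Finset

namespace MulChar

variable {F : Type*} [Field F] [Fintype F]

theorem sum_apply_add_mul_inv_apply_s2 {R : Type*} [CommRing R] [IsDomain R] [DecidableEq F]
    {χ : MulChar F R} (hχ : χ ≠ 1) (δ : F) :
    ∑ x, χ (x + δ) * χ⁻¹ x = (if δ = 0 then (Fintype.card F : R) else 0) - 1 := by
  rcases eq_or_ne δ 0 with rfl | hδ
  · simp only [add_zero, ← mul_apply, mul_inv_cancel, sum_one_eq_card_units, if_true,
      Fintype.card_eq_card_units_add_one (α := F), Nat.cast_add, Nat.cast_one, add_sub_cancel_right]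
  have jacobi := jacobiSum_nontrivial_inv (inv_ne_one.mpr hχ)
  rw [inv_inv, jacobiSum] at jacobi
  have hδχ : χ δ * χ⁻¹ δ = 1 := by
    rw [← mul_apply, mul_inv_cancel, one_apply hδ.isUnit]
  -- `x = -δ y` turns the sum into the Jacobi sum `J(χ⁻¹, χ) = -χ⁻¹ (-1)`.
  calc ∑ x, χ (x + δ) * χ⁻¹ x
      = ∑ y, χ (-δ * y + δ) * χ⁻¹ (-δ * y) :=
        (Fintype.sum_bijective _ (mulLeft_bijective₀ _ (neg_ne_zero.mpr hδ)) _ _ fun _ ↦ rfl).symm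
    _ = ∑ y, (χ δ * χ⁻¹ δ * χ⁻¹ (-1)) * (χ⁻¹ y * χ (1 - y)) := by
        congr! 1 with y
        rw [show -δ * y + δ = δ * (1 - y) by ring, neg_mul, ← neg_one_mul, map_mul, map_mul,
          map_mul]
        ring
    _ = _ := by
        rw [← mul_sum, jacobi, hδχ, one_mul, mul_neg, ← map_mul, neg_one_mul, neg_neg, map_one,
          if_neg hδ, zero_sub]

theorem sum_norm_sq_sum_apply_add {χ : MulChar F ℂ} (hχ : χ ≠ 1) (A : Finset F) :
    ∑ c, ‖∑ b ∈ A, χ (b + c)‖ ^ 2 = (#A * Fintype.card F - #A ^ 2 : ℝ) := by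
  classical
  have inner (b b' : F) : ∑ c, χ (b + c) * χ⁻¹ (b' + c) =
      (if b = b' then (Fintype.card F : ℂ) else 0) - 1 := by
    calc ∑ c, χ (b + c) * χ⁻¹ (b' + c) = ∑ x, χ (x + (b - b')) * χ⁻¹ x :=
          Fintype.sum_equiv (Equiv.addLeft b') _ _ fun c ↦ by
            simp only [Equiv.coe_addLeft]; ring_nf
      _ = _ := by simp only [sum_apply_add_mul_inv_apply_s2 hχ, sub_eq_zero]
  apply Complex.ofReal_injective
  push_cast
  simp_rw [← Complex.mul_conj', map_sum, ← RCLike.star_def, star_apply', sum_mul_sum]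
  rw [sum_comm]
  simp_rw [sum_comm (s := univ) (t := A), inner, sum_sub_distrib, sum_ite_eq]
  rw [sum_ite_of_true fun _ h ↦ h]
  simp only [sum_const, nsmul_eq_mul, mul_one]
  ring

theorem norm_apply_of_ne_zero (χ : MulChar F ℂ) {a : F} (ha : a ≠ 0) : ‖χ a‖ = 1 :=
  Complex.norm_eq_one_of_pow_eq_one
    (by rw [← map_pow, FiniteField.pow_card_sub_one_eq_one a ha, map_one])
    (Nat.sub_ne_zero_of_lt Fintype.one_lt_card)

theorem card_sub_one_le_norm_sum_apply_add {χ : MulChar F ℂ} {A : Finset F} {a lam : F}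
    (ha : a ≠ 0) (hχ : ∀ b ∈ A, a * b + lam ≠ 0 → χ (a * b + lam) = 1) :
    (#A : ℝ) - 1 ≤ ‖∑ b ∈ A, χ (b + lam * a⁻¹)‖ := by
  classical
  have hsum : ∑ b ∈ A, χ (b + lam * a⁻¹) = χ a⁻¹ * #{b ∈ A | a * b + lam ≠ 0} := by
    rw [natCast_card_filter, mul_sum]
    refine sum_congr rfl fun b hb ↦ ?_
    rw [show b + lam * a⁻¹ = a⁻¹ * (a * b + lam) by field_simp, map_mul]
    split_ifs with h
    · rw [hχ b hb h]
    · rw [not_not.mp h, χ.map_zero]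
  have hzero : #{b ∈ A | ¬ a * b + lam ≠ 0} ≤ 1 :=
    card_le_one.mpr fun b hb b' hb' ↦ by
      simp only [mem_filter, not_not] at hb hb'
      exact mul_left_cancel₀ ha (add_right_cancel (hb.2.trans hb'.2.symm))
  have hcard := card_filter_add_card_filter_not (s := A) (fun b ↦ a * b + lam ≠ 0)
  rw [hsum, norm_mul, norm_apply_of_ne_zero χ (inv_ne_zero ha), one_mul, Complex.norm_natCast]
  have : #A ≤ #{b ∈ A | a * b + lam ≠ 0} + 1 := by omega
  linarith [show (#A : ℝ) ≤ #{b ∈ A | a * b + lam ≠ 0} + 1 by exact_mod_cast this]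

theorem sq_card_sub_one_add_card_le_card {χ : MulChar F ℂ} (hχ : χ ≠ 1) {lam : F}
    (hlam : lam ≠ 0) {A : Finset F} (hA0 : (0 : F) ∉ A)
    (hA : ∀ a ∈ A, ∀ b ∈ A, a * b + lam ≠ 0 → χ (a * b + lam) = 1) :
    ((#A : ℝ) - 1) ^ 2 + #A ≤ Fintype.card F := by
  classical
  rcases A.eq_empty_or_nonempty with rfl | hne
  · simpa using Nat.one_le_iff_ne_zero.mpr Fintype.card_ne_zero
  have hpos : (1 : ℝ) ≤ #A := by exact_mod_cast hne.card_pos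
  set T : F → ℂ := fun c ↦ ∑ b ∈ A, χ (b + c)
  have hinj : Set.InjOn (fun a ↦ lam * a⁻¹) A := fun a _ b _ h ↦
    inv_injective (mul_left_cancel₀ hlam h)
  have key : (#A : ℝ) * ((#A : ℝ) - 1) ^ 2 ≤ #A * Fintype.card F - #A ^ 2 :=
    calc (#A : ℝ) * ((#A : ℝ) - 1) ^ 2 = ∑ _a ∈ A, ((#A : ℝ) - 1) ^ 2 := by
          rw [sum_const, nsmul_eq_mul]
      _ ≤ ∑ a ∈ A, ‖T (lam * a⁻¹)‖ ^ 2 := sum_le_sum fun a ha ↦ pow_le_pow_left₀ (by linarith)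
          (card_sub_one_le_norm_sum_apply_add (ne_of_mem_of_not_mem ha hA0) (hA a ha)) 2
      _ = ∑ c ∈ A.image (fun a ↦ lam * a⁻¹), ‖T c‖ ^ 2 :=
          (sum_image (f := fun c ↦ ‖T c‖ ^ 2) hinj).symm
      _ ≤ ∑ c, ‖T c‖ ^ 2 := sum_le_univ_sum_of_nonneg fun _ ↦ by positivity
      _ = #A * Fintype.card F - #A ^ 2 := sum_norm_sq_sum_apply_add hχ A
  nlinarith

end MulChar

theorem le_sqrt_four_mul_sub_three_add_one_div_two {n q : ℝ} (h : (n - 1) ^ 2 + n ≤ q) :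
    n ≤ (Real.sqrt (4 * q - 3) + 1) / 2 := by
  have : 2 * n - 1 ≤ Real.sqrt (4 * q - 3) :=
    (le_abs_self _).trans (Real.abs_le_sqrt (by nlinarith))
  linarith

theorem strong_diophantine_trivial_bound_general
    (d : ℕ) (F : Type*) [Field F] [Fintype F]
    (hq : Fintype.card F % d = 1)
    (lam : F) (hlam : lam ≠ 0)
    (A : Finset F) (hA0 : (0 : F) ∉ A)
    (hprop : ∀ a ∈ A, ∀ b ∈ A,
      a * b + lam = 0 ∨ ∃ x : F, x ≠ 0 ∧ x ^ d = a * b + lam) :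
    (A.card : ℝ) ≤ (Real.sqrt (4 * (Fintype.card F : ℝ) - 3) + 1) / 2 := by
  have hd : 2 ≤ d := by
    have := Fintype.one_lt_card (α := F)
    by_contra! h
    interval_cases d <;> omega
  obtain ⟨χ, hχd⟩ := MulChar.exists_mulChar_orderOf F
    (by simpa [hq] using Nat.dvd_sub_mod (n := d) (Fintype.card F))
    (Complex.isPrimitiveRoot_exp d (by omega))
  have hχ : χ ≠ 1 := fun h ↦ by rw [h, orderOf_one] at hχd; omega
  have hpow (x : F) (hx : x ≠ 0) : χ (x ^ d) = 1 := by
    rw [map_pow, ← MulChar.pow_apply' χ (by omega), ← hχd, pow_orderOf_eq_one,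
      MulChar.one_apply hx.isUnit]
  refine le_sqrt_four_mul_sub_three_add_one_div_two
    (MulChar.sq_card_sub_one_add_card_le_card hχ hlam hA0 fun a ha b hb hne ↦ ?_)
  obtain ⟨x, hx, hxd⟩ := (hprop a ha b hb).resolve_left hne
  rw [← hxd, hpow x hx]

/-- trivial upper bound for strong Diophantine tuples over finite fields. -/
theorem strong_diophantine_trivial_bound
    (d : ℕ) (hd : 2 ≤ d) (F : Type*) [Field F] [Fintype F]
    (hq : Fintype.card F % d = 1)
    (lam : F) (hlam : lam ≠ 0)
    (A : Finset F) (hA0 : (0 : F) ∉ A)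
    (hprop : ∀ a ∈ A, ∀ b ∈ A,
      a * b + lam = 0 ∨ ∃ x : F, x ≠ 0 ∧ x ^ d = a * b + lam) :
    (A.card : ℝ) ≤ (Real.sqrt (4 * (Fintype.card F : ℝ) - 3) + 1) / 2 :=
  strong_diophantine_trivial_bound_general d F hq lam hlam A hA0 hprop
end

section
/- Let q be a power of the prime p, let d ≥ 2 divide q−1, and set S_d = {x^d : x ∈ F_q^*}. Let λ ∈ F_q^* and let A, B ⊆ F_q^* with |A|, |B| ≥ 2. Assume that the binomial coefficient C(|A|−1+(q−1)/d, |A|) is not divisible by p. If ab + λ ∈ S_d ∪ {0} for all a ∈ A and b ∈ B, then |A|·|B| ≤ |S_d| + |B ∩ (−λ·A^{−1})| + |A| − 1, where A^{−1} = {a^{−1} : a ∈ A}. -/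
open Polynomial Finset

/-- Stepanov-type bound for product sets in shifted multiplicative subgroups. -/
theorem product_in_shifted_subgroup_bound
    (p : ℕ) [Fact p.Prime] (F : Type*) [Field F] [Fintype F] [DecidableEq F] [CharP F p]
    (d : ℕ) (hd : 2 ≤ d) (hdvd : d ∣ Fintype.card F - 1)
    (lam : F) (hlam : lam ≠ 0)
    (A B : Finset F) (hA0 : (0 : F) ∉ A) (hB0 : (0 : F) ∉ B)
    (hA2 : 2 ≤ A.card) (hB2 : 2 ≤ B.card)
    (hbin : ¬ p ∣ Nat.choose (A.card - 1 + (Fintype.card F - 1) / d) A.card)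
    (hprop : ∀ a ∈ A, ∀ b ∈ B,
      a * b + lam = 0 ∨ ∃ x : F, x ≠ 0 ∧ x ^ d = a * b + lam) :
    A.card * B.card + 1 ≤
      (Finset.univ.filter (fun y : F => ∃ x : F, x ≠ 0 ∧ x ^ d = y)).card
        + (B ∩ A.image (fun a => -lam * a⁻¹)).card + A.card := by
  classical
  set q := Fintype.card F with hqdef
  set n := A.card with hndef
  set s := (q - 1) / d with hsdef
  set S := Finset.univ.filter (fun y : F => ∃ x : F, x ≠ 0 ∧ x ^ d = y) with hSdef
  set T := A.image (fun a => -lam * a⁻¹) with hTdef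
  set t := (B ∩ T).card with htdef
  have hq2 : 2 ≤ q := Fintype.one_lt_card
  have hds : d * s = q - 1 := Nat.mul_div_cancel' hdvd
  have hs1 : 1 ≤ s := by
    rcases Nat.eq_zero_or_pos s with h | h
    · rw [h, mul_zero] at hds; omega
    · exact h
  set m := n - 1 + s with hmdef
  have hn2 : 2 ≤ n := hA2
  have hnm : n ≤ m := by omega
  -- interpolation coefficients
  set c : F → F := fun a => (Lagrange.basis A id a).eval 0 with hcdef
  have hc : ∀ P : F[X], P.degree < (n : WithBot ℕ) → ∑ a ∈ A, c a * P.eval a = P.eval 0 := by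
    intro P hP
    have h1 : P = Lagrange.interpolate A id (fun i => P.eval (id i)) :=
      Lagrange.eq_interpolate (s := A) (v := id) (f := P) Function.injective_id.injOn
        (by rw [← hndef]; exact hP)
    conv_rhs => rw [h1]
    rw [Lagrange.interpolate_apply, eval_finset_sum]
    refine Finset.sum_congr rfl fun a _ => ?_
    simp [hcdef, mul_comm]
  -- the Stepanov polynomial
  set f : F[X] := ∑ a ∈ A, C (c a) * (C a * X + C lam) ^ m with hfdef
  set Ff : F[X] := f - C (lam ^ (n - 1)) with hFdef
  -- coefficient formula for powers of linear polynomials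
  have hcoeff : ∀ (a e : F), a ≠ 0 → ∀ k, k ≤ m → ((C a * X + C e) ^ m).coeff k
      = (m.choose k : F) * (a ^ k * e ^ (m - k)) := by
    intro a e ha k hk
    have h1 : C a * X + C e = C a * (X + C (e * a⁻¹)) := by
      rw [mul_add, ← C_mul]
      congr 1
      field_simp
    rw [h1, mul_pow, ← C_pow, coeff_C_mul, coeff_X_add_C_pow]
    have h2 : a ^ m = a ^ k * a ^ (m - k) := by
      rw [← pow_add]; congr 1; omega
    rw [mul_pow e a⁻¹, inv_pow, h2]
    field_simp
  -- composed polynomial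
  have hcomp : ∀ b : F, f.comp (X + C b)
      = ∑ a ∈ A, C (c a) * (C a * X + C (a * b + lam)) ^ m := by
    intro b
    rw [hfdef, Polynomial.sum_comp]
    refine Finset.sum_congr rfl fun a _ => ?_
    simp only [mul_comp, pow_comp, add_comp, C_comp, X_comp]
    congr 1
    rw [C_add, C_mul]
    ring
  -- key vanishing of low coefficients
  have hkey : ∀ b : F, b ≠ 0 → (∀ a ∈ A, a * b + lam = 0 ∨ (a * b + lam) ^ s = 1) →
      ∀ k, k < n → (∀ a ∈ A, a * b + lam = 0 → k + 2 ≤ n) →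
      (Ff.comp (X + C b)).coeff k = 0 := by
    intro b hb hSb k hkn hbad
    have hkm : k ≤ m := by omega
    rw [hFdef, sub_comp, C_comp, coeff_sub, hcomp b, finset_sum_coeff]
    have hterm : ∀ a ∈ A, (C (c a) * (C a * X + C (a * b + lam)) ^ m).coeff k
        = (m.choose k : F) * (c a * (a ^ k * (a * b + lam) ^ (n - 1 - k))) := by
      intro a ha
      have ha0 : a ≠ 0 := fun h => hA0 (h ▸ ha)
      rw [coeff_C_mul, hcoeff a _ ha0 k hkm]
      have hred : (a * b + lam) ^ (m - k) = (a * b + lam) ^ (n - 1 - k) := by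
        rcases hSb a ha with h0 | h1
        · have hx1 : m - k ≠ 0 := by omega
          have hx2 : k + 2 ≤ n := hbad a ha h0
          have hx3 : n - 1 - k ≠ 0 := by omega
          rw [h0, zero_pow hx1, zero_pow hx3]
        · have hmk : m - k = s + (n - 1 - k) := by omega
          rw [hmk, pow_add, h1, one_mul]
      rw [hred]; ring
    rw [Finset.sum_congr rfl hterm, ← Finset.mul_sum]
    -- evaluate the inner sum via interpolation
    set P : F[X] := X ^ k * (C b * X + C lam) ^ (n - 1 - k) with hPdef
    have hPdeg : P.degree < (n : WithBot ℕ) := by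
      have h1 : P.natDegree ≤ (n - 1 : ℕ) := by
        refine le_trans (natDegree_mul_le) ?_
        have h2 : ((C b * X + C lam) ^ (n - 1 - k)).natDegree ≤ (n - 1 - k) * 1 :=
          le_trans natDegree_pow_le (Nat.mul_le_mul_left _ natDegree_linear_le)
        rw [natDegree_X_pow]
        omega
      calc P.degree ≤ (P.natDegree : WithBot ℕ) := degree_le_natDegree
        _ ≤ ((n - 1 : ℕ) : WithBot ℕ) := by exact_mod_cast Nat.cast_le.mpr h1
        _ < (n : WithBot ℕ) := by
            have hx : (n - 1 : ℕ) < n := by omega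
            exact_mod_cast hx
    have hPeval : ∀ a ∈ A, c a * P.eval a = c a * (a ^ k * (a * b + lam) ^ (n - 1 - k)) := by
      intro a _
      rw [hPdef]
      simp [mul_comm b a]
    have hsum : ∑ a ∈ A, c a * (a ^ k * (a * b + lam) ^ (n - 1 - k)) = P.eval 0 := by
      rw [← Finset.sum_congr rfl hPeval]
      exact hc P hPdeg
    rw [hsum, hPdef]
    rcases Nat.eq_zero_or_pos k with hk0 | hk0
    · subst hk0
      simp only [Nat.sub_zero, pow_zero, one_mul, eval_mul, eval_pow, eval_add, eval_mul,
        eval_C, eval_X, mul_zero, zero_add, Nat.choose_zero_right, Nat.cast_one,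
        coeff_C_zero]
      ring
    · rw [coeff_C, if_neg (by omega : k ≠ 0)]
      simp [zero_pow (by omega : k ≠ 0)]
  -- nonvanishing of coefficient n
  have hcoefn : Ff.coeff n ≠ 0 := by
    have h0 : Ff.coeff n = f.coeff n := by
      rw [hFdef, coeff_sub, coeff_C, if_neg (by omega : n ≠ 0), sub_zero]
    have h1 : f.coeff n = (m.choose n : F) * (lam ^ (m - n) * ∑ a ∈ A, c a * a ^ n) := by
      rw [hfdef, finset_sum_coeff]
      have hterm : ∀ a ∈ A, (C (c a) * (C a * X + C lam) ^ m).coeff n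
          = (m.choose n : F) * (lam ^ (m - n) * (c a * a ^ n)) := by
        intro a ha
        have ha0 : a ≠ 0 := fun h => hA0 (h ▸ ha)
        rw [coeff_C_mul, hcoeff a lam ha0 n hnm]
        ring
      rw [Finset.sum_congr rfl hterm, ← Finset.mul_sum, ← Finset.mul_sum]
    have hch : (m.choose n : F) ≠ 0 := by
      intro h
      exact hbin ((CharP.cast_eq_zero_iff F p _).mp h)
    have hsig : ∑ a ∈ A, c a * a ^ n ≠ 0 := by
      set Z : F[X] := ∏ x ∈ A, (X - C x) with hZdef
      have hZmonic : Z.Monic := monic_prod_of_monic _ _ fun x _ => monic_X_sub_C x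
      have hZdeg : Z.natDegree = n := by
        rw [hZdef, natDegree_prod _ _ fun x _ => X_sub_C_ne_zero x]
        simp [natDegree_X_sub_C, hndef]
      have hZeval : ∀ a ∈ A, Z.eval a = 0 := fun a ha => by
        rw [hZdef, eval_prod]
        exact Finset.prod_eq_zero ha (by simp)
      have hZ0 : Z.eval 0 ≠ 0 := by
        rw [hZdef, eval_prod]
        rw [Finset.prod_ne_zero_iff]
        intro a ha
        simp only [eval_sub, eval_X, eval_C, zero_sub, neg_ne_zero]
        exact fun h => hA0 (h ▸ ha)
      set L : F[X] := Z - X ^ n with hLdef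
      have hLdeg : L.degree < (n : WithBot ℕ) := by
        have h1 : Z.degree = ((X : F[X]) ^ n).degree := by
          rw [degree_X_pow, degree_eq_natDegree hZmonic.ne_zero, hZdeg]
        have h2 := degree_sub_lt h1 hZmonic.ne_zero
          (by rw [hZmonic.leadingCoeff, (monic_X_pow n).leadingCoeff])
        rw [← hLdef] at h2
        calc L.degree < Z.degree := h2
          _ = (n : WithBot ℕ) := by rw [degree_eq_natDegree hZmonic.ne_zero, hZdeg]
      have hL := hc L hLdeg
      have h3 : ∑ a ∈ A, c a * a ^ n = - L.eval 0 := by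
        rw [← hL, ← Finset.sum_neg_distrib]
        refine Finset.sum_congr rfl fun a ha => ?_
        rw [hLdef]
        simp [hZeval a ha]
      have h4 : L.eval 0 = Z.eval 0 := by
        rw [hLdef]
        simp [zero_pow (by omega : n ≠ 0)]
      rw [h3, h4]
      exact neg_ne_zero.mpr hZ0
    rw [h0, h1]
    exact mul_ne_zero hch (mul_ne_zero (pow_ne_zero _ hlam) hsig)
  have hF0 : Ff ≠ 0 := fun h => hcoefn (by rw [h, coeff_zero])
  -- degree bound
  have hFdeg : Ff.natDegree ≤ m := by
    rw [hFdef]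
    refine le_trans (natDegree_sub_le _ _) ?_
    rw [max_le_iff]
    constructor
    · rw [hfdef]
      refine natDegree_sum_le_of_forall_le _ _ fun a _ => ?_
      refine le_trans natDegree_mul_le ?_
      rw [natDegree_C]
      have h2 : ((C a * X + C lam) ^ m).natDegree ≤ m * 1 :=
        le_trans natDegree_pow_le (Nat.mul_le_mul_left _ natDegree_linear_le)
      omega
    · rw [natDegree_C]; omega
  -- characterization of bad elements
  have hT : ∀ b : F, b ≠ 0 → (b ∈ T ↔ ∃ a ∈ A, a * b + lam = 0) := by
    intro b hb
    rw [hTdef, Finset.mem_image]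
    constructor
    · rintro ⟨a, ha, rfl⟩
      have ha0 : a ≠ 0 := fun h => hA0 (h ▸ ha)
      exact ⟨a, ha, by field_simp; ring⟩
    · rintro ⟨a, ha, h⟩
      have ha0 : a ≠ 0 := fun h => hA0 (h ▸ ha)
      refine ⟨a, ha, ?_⟩
      have h2 : a * b = -lam := by linear_combination h
      rw [← h2, mul_comm a b, mul_assoc, mul_inv_cancel₀ ha0, mul_one]
  -- multiplicity weights
  set w : F → ℕ := fun b => if b ∈ T then n - 1 else n with hwdef
  have hdvd2 : ∀ b ∈ B, (X - C b) ^ (w b) ∣ Ff := by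
    intro b hb
    have hbne : b ≠ 0 := fun h => hB0 (h ▸ hb)
    have hSb : ∀ a ∈ A, a * b + lam = 0 ∨ (a * b + lam) ^ s = 1 := by
      intro a ha
      rcases hprop a ha b hb with h | ⟨x, hx0, hx⟩
      · exact Or.inl h
      · right
        rw [← hx, ← pow_mul, hds]
        exact FiniteField.pow_card_sub_one_eq_one x hx0
    have hXdvd : X ^ (w b) ∣ Ff.comp (X + C b) := by
      rw [X_pow_dvd_iff]
      intro k hk
      by_cases hbT : b ∈ T
      · rw [hwdef] at hk
        simp only [if_pos hbT] at hk
        exact hkey b hbne hSb k (by omega) (fun a _ _ => by omega)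
      · rw [hwdef] at hk
        simp only [if_neg hbT] at hk
        refine hkey b hbne hSb k hk (fun a ha h0 => absurd ((hT b hbne).mpr ⟨a, ha, h0⟩) hbT)
    obtain ⟨g, hg⟩ := hXdvd
    have hFb : Ff = (Ff.comp (X + C b)).comp (X - C b) := by
      rw [comp_assoc]
      simp [comp_X]
    rw [hFb, hg, mul_comp, pow_comp, X_comp]
    exact ⟨g.comp (X - C b), rfl⟩
  -- product divides
  have hproddvd : (∏ b ∈ B, (X - C b) ^ (w b)) ∣ Ff := by
    refine Finset.prod_dvd_of_coprime ?_ (fun b hb => hdvd2 b hb)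
    intro b1 hb1 b2 hb2 hne
    exact (pairwise_coprime_X_sub_C Function.injective_id hne).pow
  have hdegprod : (∏ b ∈ B, (X - C b) ^ (w b)).natDegree = ∑ b ∈ B, w b := by
    rw [natDegree_prod _ _ fun b _ => pow_ne_zero _ (X_sub_C_ne_zero b)]
    refine Finset.sum_congr rfl fun b _ => ?_
    rw [natDegree_pow, natDegree_X_sub_C, mul_one]
  have hsumw : ∑ b ∈ B, w b ≤ m := by
    have h1 := Polynomial.natDegree_le_of_dvd hproddvd hF0
    rw [hdegprod] at h1
    exact le_trans h1 hFdeg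
  -- arithmetic: n * |B| ≤ ∑ w + t
  have hfinal : n * B.card ≤ ∑ b ∈ B, w b + t := by
    have hwb : ∀ b ∈ B, n ≤ w b + (if b ∈ T then 1 else 0) := by
      intro b _
      by_cases h : b ∈ T <;> simp [hwdef, h] <;> omega
    calc n * B.card = ∑ _b ∈ B, n := by rw [Finset.sum_const, smul_eq_mul, mul_comm]
      _ ≤ ∑ b ∈ B, (w b + if b ∈ T then 1 else 0) := Finset.sum_le_sum hwb
      _ = ∑ b ∈ B, w b + ∑ b ∈ B, (if b ∈ T then 1 else 0) := Finset.sum_add_distrib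
      _ = ∑ b ∈ B, w b + t := by
          rw [← Finset.card_filter, Finset.filter_mem_eq_inter, htdef]
  -- |S| ≥ s
  have hScard : s ≤ S.card := by
    set U := Finset.univ.filter (fun x : F => x ≠ 0) with hUdef
    have hU : U.card = q - 1 := by
      rw [hUdef, Finset.filter_ne', Finset.card_erase_of_mem (Finset.mem_univ 0),
        Finset.card_univ]
    have himg : U.image (· ^ d) ⊆ S := by
      intro y hy
      rw [Finset.mem_image] at hy
      obtain ⟨x, hx, rfl⟩ := hy
      rw [hSdef, Finset.mem_filter]
      exact ⟨Finset.mem_univ _, x, (Finset.mem_filter.mp hx).2, rfl⟩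
    have hfib : U.card ≤ d * (U.image (· ^ d)).card := by
      refine Finset.card_le_mul_card_image _ _ fun y _ => ?_
      have hsub : U.filter (fun x => x ^ d = y) ⊆ (Polynomial.nthRoots d y).toFinset := by
        intro x hx
        rw [Multiset.mem_toFinset, Polynomial.mem_nthRoots (by omega : 0 < d)]
        exact (Finset.mem_filter.mp hx).2
      calc (U.filter (fun x => x ^ d = y)).card ≤ (Polynomial.nthRoots d y).toFinset.card :=
            Finset.card_le_card hsub
        _ ≤ Multiset.card (Polynomial.nthRoots d y) := Multiset.toFinset_card_le _
        _ ≤ d := Polynomial.card_nthRoots d y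
    have h2 : d * s ≤ d * (U.image (· ^ d)).card := by
      rw [hds, ← hU]; exact hfib
    have h3 := Nat.le_of_mul_le_mul_left h2 (by omega : 0 < d)
    exact le_trans h3 (Finset.card_le_card himg)
  omega
end

section
/- Let q be a power of the prime p, let d ≥ 2 divide q−1, and set S_d = {x^d : x ∈ F_q^*}. Let λ ∈ S_d and let A, B ⊆ F_q^* with |A|, |B| ≥ 2. Assume C(|A|−1+(q−1)/d, |A|) is not divisible by p. If ab + λ ∈ S_d ∪ {0} for all a ∈ A, b ∈ B, then |A|·|B| ≤ |S_d| + |B ∩ (−λ·A^{−1})| − 1. -/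
open Polynomial Finset

lemma coeff_linear_pow {F : Type*} [Field F] (a mu : F) (N j : ℕ) :
    ((C a * X + C mu) ^ N).coeff j = (N.choose j : F) * a ^ j * mu ^ (N - j) := by
  rw [add_pow]
  have h : ∀ i ∈ Finset.range (N + 1),
      (C a * X) ^ i * (C mu) ^ (N - i) * ((N.choose i : ℕ) : F[X])
        = C ((N.choose i : F) * a ^ i * mu ^ (N - i)) * X ^ i := by
    intro i _
    rw [← C_eq_natCast, mul_pow, ← C_pow, ← C_pow, C_mul, C_mul]
    ring
  rw [Finset.sum_congr rfl h, finset_sum_coeff]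
  simp only [coeff_C_mul, coeff_X_pow, mul_ite, mul_one, mul_zero]
  rw [Finset.sum_ite_eq (Finset.range (N+1)) j]
  by_cases hj : j ∈ Finset.range (N+1)
  · simp [hj]
  · simp only [hj, if_false]
    have : N < j := by simp [Finset.mem_range] at hj; omega
    rw [Nat.choose_eq_zero_of_lt this]
    simp

lemma exists_coeffs {F : Type*} [Field F] (A : Finset F) (k : ℕ) (hk : k < A.card) :
    ∃ c : {x // x ∈ A} → F, c ≠ 0 ∧ ∀ j, 1 ≤ j → j ≤ k → ∑ a ∈ A.attach, c a * (a : F) ^ j = 0 := by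
  classical
  let φ : ({x // x ∈ A} → F) →ₗ[F] (Fin k → F) :=
    { toFun := fun c j => ∑ a ∈ A.attach, c a * (a : F) ^ (j.1 + 1)
      map_add' := by
        intro x y; funext j; simp [add_mul, Finset.sum_add_distrib]
      map_smul' := by
        intro r x; funext j; simp [Finset.mul_sum, mul_assoc] }
  have hninj : ¬ Function.Injective φ := by
    intro hinj
    have h1 := LinearMap.finrank_le_finrank_of_injective hinj
    have h2 : Module.finrank F ({x // x ∈ A} → F) = A.card := by
      simp [Module.finrank_pi, Fintype.card_coe]
    have h3 : Module.finrank F (Fin k → F) = k := by simp [Module.finrank_pi]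
    omega
  rw [← LinearMap.ker_eq_bot] at hninj
  obtain ⟨c, hc, hc0⟩ := (Submodule.ne_bot_iff _).mp hninj
  refine ⟨c, hc0, ?_⟩
  intro j hj1 hjk
  have := congrFun (LinearMap.mem_ker.mp hc) ⟨j - 1, by omega⟩
  simpa [φ, Nat.sub_add_cancel hj1] using this

lemma moments_zero_imp {F : Type*} [Field F] [DecidableEq F] (A : Finset F) (h0 : (0:F) ∉ A)
    (c : {x // x ∈ A} → F)
    (h : ∀ j, 1 ≤ j → j ≤ A.card → ∑ a ∈ A.attach, c a * (a : F) ^ j = 0) :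
    c = 0 := by
  classical
  set n := A.card with hn
  funext a0
  have ha0A : (a0 : F) ∈ A := a0.2
  have hA1 : 1 ≤ A.card := Finset.card_pos.mpr ⟨a0, ha0A⟩
  set G : F[X] := X * ∏ a ∈ A.erase ↑a0, (X - C a) with hG
  have hGdeg : G.natDegree = n := by
    rw [hG, Monic.natDegree_mul monic_X (monic_prod_of_monic _ _ (fun a _ => monic_X_sub_C a)),
      natDegree_X, natDegree_prod_of_monic _ _ (fun a _ => monic_X_sub_C a)]
    simp only [natDegree_X_sub_C, Finset.sum_const, smul_eq_mul, mul_one,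
      Finset.card_erase_of_mem ha0A]
    omega
  have hG0 : G.coeff 0 = 0 := by
    rw [hG, mul_coeff_zero, coeff_X_zero, zero_mul]
  have key : ∑ a ∈ A.attach, c a * G.eval ↑a
      = ∑ j ∈ Finset.range (n+1), G.coeff j * (∑ a ∈ A.attach, c a * (a:F)^j) := by
    have h1 : ∀ a ∈ A.attach, c a * G.eval ↑a
        = ∑ j ∈ Finset.range (n+1), G.coeff j * (c a * (a:F)^j) := by
      intro a _
      rw [eval_eq_sum_range' (by omega : G.natDegree < n + 1), Finset.mul_sum]
      exact Finset.sum_congr rfl fun j _ => by ring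
    rw [Finset.sum_congr rfl h1, Finset.sum_comm]
    simp [Finset.mul_sum]
  have hRHS : ∑ j ∈ Finset.range (n+1), G.coeff j * (∑ a ∈ A.attach, c a * (a:F)^j) = 0 := by
    refine Finset.sum_eq_zero fun j hj => ?_
    rcases Nat.eq_zero_or_pos j with rfl | hj1
    · rw [hG0, zero_mul]
    · rw [h j hj1 (by simp [Finset.mem_range] at hj; omega), mul_zero]
  have hLHS : ∑ a ∈ A.attach, c a * G.eval ↑a = c a0 * G.eval ↑a0 := by
    refine Finset.sum_eq_single a0 (fun a _ hne => ?_) (fun habs => (habs (Finset.mem_attach _ _)).elim)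
    have haA : (a : F) ∈ A.erase ↑a0 := by
      refine Finset.mem_erase.mpr ⟨?_, a.2⟩
      exact fun hh => hne (Subtype.ext hh)
    have : G.eval ↑a = 0 := by
      rw [hG, eval_mul, eval_prod]
      rw [Finset.prod_eq_zero haA (by simp)]
      ring
    rw [this, mul_zero]
  have hGa0 : G.eval ↑a0 ≠ 0 := by
    rw [hG, eval_mul, eval_prod]
    refine mul_ne_zero ?_ ?_
    · rw [eval_X]
      exact fun hh => h0 (hh ▸ ha0A)
    · rw [Finset.prod_ne_zero_iff]
      intro a ha
      have := (Finset.mem_erase.mp ha).1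
      simp only [eval_sub, eval_X, eval_C]
      exact sub_ne_zero.mpr (fun hh => this hh.symm)
  have hfin : c a0 * G.eval ↑a0 = 0 := by rw [← hLHS, key]; exact hRHS
  have := (mul_eq_zero.mp hfin).resolve_right hGa0
  simpa using this

/-- stronger Stepanov-type bound when the shift is a d-th power. -/
theorem product_in_shifted_subgroup_bound_power_shift
    (p : ℕ) [Fact p.Prime] (F : Type*) [Field F] [Fintype F] [DecidableEq F] [CharP F p]
    (d : ℕ) (hd : 2 ≤ d) (hdvd : d ∣ Fintype.card F - 1)
    (lam : F) (hlam : ∃ x : F, x ≠ 0 ∧ x ^ d = lam)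
    (A B : Finset F) (hA0 : (0 : F) ∉ A) (hB0 : (0 : F) ∉ B)
    (hA2 : 2 ≤ A.card) (hB2 : 2 ≤ B.card)
    (hbin : ¬ p ∣ Nat.choose (A.card - 1 + (Fintype.card F - 1) / d) A.card)
    (hprop : ∀ a ∈ A, ∀ b ∈ B,
      a * b + lam = 0 ∨ ∃ x : F, x ≠ 0 ∧ x ^ d = a * b + lam) :
    A.card * B.card + 1 ≤
      (Finset.univ.filter (fun y : F => ∃ x : F, x ≠ 0 ∧ x ^ d = y)).card
        + (B ∩ A.image (fun a => -lam * a⁻¹)).card := by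
  classical
  obtain ⟨x0, hx00, hx0d⟩ := hlam
  have hlam0 : lam ≠ 0 := by rw [← hx0d]; exact pow_ne_zero _ hx00
  set q := Fintype.card F with hq
  have hq2 : 2 ≤ q := Fintype.one_lt_card
  set s : ℕ := (q - 1) / d with hs
  have hds : d * s = q - 1 := Nat.mul_div_cancel' hdvd
  have hd0 : 0 < d := by omega
  have hs1 : 1 ≤ s := by
    rcases Nat.eq_zero_or_pos s with h | h
    · rw [h, mul_zero] at hds; omega
    · exact h
  have hpow : ∀ y : F, (∃ x : F, x ≠ 0 ∧ x ^ d = y) → y ^ s = 1 := by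
    rintro y ⟨x, hx, rfl⟩
    rw [← pow_mul, hds]
    exact FiniteField.pow_card_sub_one_eq_one x hx
  have hlams : lam ^ s = 1 := hpow _ ⟨x0, hx00, hx0d⟩
  set n := A.card with hn
  set k := n - 1 with hk
  have hk1 : 1 ≤ k := by omega
  have hkn : k + 1 = n := by omega
  set N := k + s with hN
  -- cardinality of the set of d-th powers is at least s
  have hScard : s ≤ (Finset.univ.filter (fun y : F => ∃ x : F, x ≠ 0 ∧ x ^ d = y)).card := by
    set S := Finset.univ.filter (fun y : F => ∃ x : F, x ≠ 0 ∧ x ^ d = y) with hSdef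
    have hmapsto : ∀ x ∈ (Finset.univ.erase (0:F)), x ^ d ∈ S := by
      intro x hx
      rw [hSdef]
      exact Finset.mem_filter.mpr ⟨Finset.mem_univ _, ⟨x, (Finset.mem_erase.mp hx).1, rfl⟩⟩
    have hcard := Finset.card_eq_sum_card_fiberwise hmapsto
    have hfiber : ∀ y ∈ S, ((Finset.univ.erase (0:F)).filter (fun x => x ^ d = y)).card ≤ d := by
      intro y hy
      have hsub : ((Finset.univ.erase (0:F)).filter (fun x => x ^ d = y))
          ⊆ (X^d - C y : F[X]).roots.toFinset := by
        intro x hx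
        rw [Multiset.mem_toFinset, mem_roots']
        refine ⟨X_pow_sub_C_ne_zero (by omega) y, ?_⟩
        have := (Finset.mem_filter.mp hx).2
        simp [IsRoot, this]
      calc ((Finset.univ.erase (0:F)).filter (fun x => x ^ d = y)).card
          ≤ (X^d - C y : F[X]).roots.toFinset.card := Finset.card_le_card hsub
        _ ≤ Multiset.card (X^d - C y : F[X]).roots := Multiset.toFinset_card_le _
        _ ≤ (X^d - C y : F[X]).natDegree := card_roots' _
        _ = d := natDegree_X_pow_sub_C
    have h1 : q - 1 ≤ S.card * d := by
      have he : (Finset.univ.erase (0:F)).card = q - 1 := by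
        rw [Finset.card_erase_of_mem (Finset.mem_univ _), Finset.card_univ]
      calc q - 1 = ∑ y ∈ S, ((Finset.univ.erase (0:F)).filter (fun x => x ^ d = y)).card := by
            rw [← he, hcard]
        _ ≤ ∑ _y ∈ S, d := Finset.sum_le_sum hfiber
        _ = S.card * d := by rw [Finset.sum_const, smul_eq_mul]
    have h2 : s * d ≤ S.card * d := by
      calc s * d = q - 1 := by rw [mul_comm]; exact hds
        _ ≤ S.card * d := h1
    exact Nat.le_of_mul_le_mul_right h2 hd0
  suffices hmain : n * B.card + 1 ≤ s + (B ∩ A.image (fun a => -lam * a⁻¹)).card from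
    hmain.trans (Nat.add_le_add_right hScard _)
  obtain ⟨c, hc0, hmom⟩ := exists_coeffs A k (by omega)
  set m : ℕ → F := fun j => ∑ a ∈ A.attach, c a * (a:F)^j with hm
  set C0 : F := lam ^ k * m 0 with hC0
  set P : F[X] := (∑ a ∈ A.attach, C (c a) * (C (a:F) * X + C lam) ^ N) - C C0 with hP
  have hPcoeff : ∀ j, P.coeff j
      = (N.choose j : F) * lam ^ (N - j) * m j - (if j = 0 then C0 else 0) := by
    intro j
    rw [hP, coeff_sub, finset_sum_coeff]
    congr 1
    · simp only [coeff_C_mul, coeff_linear_pow, hm]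
      rw [Finset.mul_sum]
      exact Finset.sum_congr rfl fun a _ => by ring
    · simp [coeff_C]
  have hPne : P ≠ 0 := by
    intro h0
    have hcoeffn := hPcoeff n
    rw [h0, coeff_zero] at hcoeffn
    have hnz : (N.choose n : F) ≠ 0 := by
      rw [Ne, CharP.cast_eq_zero_iff F p]
      exact hbin
    have hmn : m n = 0 := by
      have h2 : (N.choose n : F) * lam ^ (N - n) * m n = 0 := by
        have : ¬ n = 0 := by omega
        simp only [this, if_false, sub_zero] at hcoeffn
        exact hcoeffn.symm
      rcases mul_eq_zero.mp h2 with h3 | h3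
      · rcases mul_eq_zero.mp h3 with h4 | h4
        · exact absurd h4 hnz
        · exact absurd h4 (pow_ne_zero _ hlam0)
      · exact h3
    have : c = 0 := by
      refine moments_zero_imp A hA0 c fun j hj1 hjn => ?_
      rcases Nat.lt_or_ge j n with hlt | hge
      · exact hmom j hj1 (by omega)
      · have : j = n := by omega
        rw [this]; exact hmn
    exact hc0 this
  have hPdeg : P.natDegree ≤ N := by
    rw [hP]
    refine le_trans (natDegree_sub_le _ _) ?_
    rw [max_le_iff]
    constructor
    · refine Polynomial.natDegree_sum_le_of_forall_le _ _ fun a _ => ?_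
      refine le_trans (natDegree_C_mul_le _ _) ?_
      refine le_trans (natDegree_pow_le) ?_
      have h1 : (C (a:F) * X + C lam).natDegree ≤ 1 := by
        refine le_trans (natDegree_add_le _ _) ?_
        rw [max_le_iff]
        refine ⟨le_trans (natDegree_C_mul_le _ _) (by rw [natDegree_X]), by simp⟩
      calc N * (C (a:F) * X + C lam).natDegree ≤ N * 1 := Nat.mul_le_mul_left _ h1
        _ = N := mul_one N
    · simp
  have htaylor : ∀ b : F, ∀ j, (taylor b P).coeff j
      = (N.choose j : F) * (∑ a ∈ A.attach, c a * (a:F)^j * ((a:F)*b + lam)^(N - j))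
        - (if j = 0 then C0 else 0) := by
    intro b j
    rw [hP, map_sub, map_sum, coeff_sub]
    congr 1
    · rw [finset_sum_coeff, Finset.mul_sum]
      refine Finset.sum_congr rfl fun a _ => ?_
      have hterm : taylor b (C (c a) * (C (a:F) * X + C lam)^N)
          = C (c a) * (C (a:F) * X + C ((a:F)*b + lam))^N := by
        simp only [taylor_apply, mul_comp, pow_comp, add_comp, C_comp, X_comp]
        rw [C_add, C_mul]
        ring
      rw [hterm, coeff_C_mul, coeff_linear_pow]
      ring
    · rw [show taylor b (C C0) = C C0 from by rw [taylor_apply, C_comp]]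
      simp [coeff_C]
  have hmomm : ∀ j, 1 ≤ j → j ≤ k → m j = 0 := fun j h1 h2 => hmom j h1 h2
  have hvanish : ∀ b : F, (∀ a ∈ A, (a*b + lam = 0 ∨ (a*b+lam)^s = 1)) →
      ∀ j, j ≤ k → (j < k ∨ ∀ a ∈ A, a*b + lam ≠ 0) → (taylor b P).coeff j = 0 := by
    intro b hQ j hjk hside
    rw [htaylor b j]
    have hstep1 : ∀ a ∈ A.attach,
        c a * (a:F)^j * ((a:F)*b+lam)^(N-j) = c a * (a:F)^j * ((a:F)*b+lam)^(k-j) := by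
      intro a _
      rcases hQ a a.2 with h0 | h1
      · rcases hside with hlt | hall
        · rw [h0, zero_pow (by omega : N - j ≠ 0), zero_pow (by omega : k - j ≠ 0)]
        · exact absurd h0 (hall a a.2)
      · have he : ((a:F)*b+lam)^(N-j) = ((a:F)*b+lam)^(k-j) := by
          rw [show N - j = s + (k - j) by omega, pow_add, h1, one_mul]
        rw [he]
    rw [Finset.sum_congr rfl hstep1]
    have hstep2 : ∑ a ∈ A.attach, c a * (a:F)^j * ((a:F)*b+lam)^(k-j)
        = ∑ i ∈ Finset.range (k-j+1), ((k-j).choose i : F) * b^i * lam^(k-j-i) * m (j+i) := by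
      have expand : ∀ a ∈ A.attach, c a * (a:F)^j * ((a:F)*b+lam)^(k-j)
          = ∑ i ∈ Finset.range (k-j+1),
              ((k-j).choose i : F) * b^i * lam^(k-j-i) * (c a * (a:F)^(j+i)) := by
        intro a _
        rw [add_pow, Finset.mul_sum]
        refine Finset.sum_congr rfl fun i _ => ?_
        rw [mul_pow, pow_add]
        push_cast
        ring
      rw [Finset.sum_congr rfl expand, Finset.sum_comm]
      refine Finset.sum_congr rfl fun i _ => ?_
      rw [hm, Finset.mul_sum]
    rw [hstep2]
    rcases Nat.eq_zero_or_pos j with rfl | hj1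
    · have hone : ∑ i ∈ Finset.range (k-0+1), ((k-0).choose i : F) * b^i * lam^(k-0-i) * m (0+i)
          = C0 := by
        rw [Finset.sum_eq_single_of_mem 0 (Finset.mem_range.mpr (by omega))]
        · simp [hC0]
        · intro i hi hi0
          rw [show (0:ℕ) + i = i from by omega,
            hmomm i (by omega) (by simp [Finset.mem_range] at hi; omega), mul_zero]
      rw [hone]
      simp
    · have hzero : ∀ i ∈ Finset.range (k-j+1),
          ((k-j).choose i : F) * b^i * lam^(k-j-i) * m (j+i) = 0 := by
        intro i hi
        rw [hmomm (j+i) (by omega) (by simp [Finset.mem_range] at hi; omega), mul_zero]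
      rw [Finset.sum_eq_zero hzero, mul_zero, if_neg (by omega), sub_zero]
  have hdvd2 : ∀ (b : F) (r : ℕ), (∀ j < r, (taylor b P).coeff j = 0) → (X - C b)^r ∣ P := by
    intro b r hcoeffs
    obtain ⟨H, hH⟩ := (X_pow_dvd_iff).mpr hcoeffs
    have hcomp : P = (taylor b P).comp (X - C b) := by
      have h1 : taylor (-b) (taylor b P) = P := by rw [taylor_taylor]; simp
      conv_lhs => rw [← h1]
      rw [taylor_apply, C_neg, ← sub_eq_add_neg]
    rw [hcomp, hH, mul_comp, pow_comp, X_comp]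
    exact Dvd.intro _ rfl
  set I := A.image (fun a => -lam * a⁻¹) with hI
  have hmult : ∀ b ∈ insert (0:F) B, (if b ∈ I then k else n) ≤ P.roots.count b := by
    intro b hb
    have hQ : ∀ a ∈ A, (a*b + lam = 0 ∨ (a*b+lam)^s = 1) := by
      rcases Finset.mem_insert.mp hb with rfl | hbB
      · intro a ha; right; rw [mul_zero, zero_add]; exact hlams
      · intro a ha
        rcases hprop a ha b hbB with h | h
        · exact Or.inl h
        · exact Or.inr (hpow _ h)
    rw [count_roots, le_rootMultiplicity_iff hPne]
    by_cases hbI : b ∈ I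
    · rw [if_pos hbI]
      exact hdvd2 b k (fun j hj => hvanish b hQ j (by omega) (Or.inl hj))
    · rw [if_neg hbI]
      have hgood : ∀ a ∈ A, a*b + lam ≠ 0 := by
        intro a ha habs
        apply hbI
        rw [hI]
        refine Finset.mem_image.mpr ⟨a, ha, ?_⟩
        have ha0 : a ≠ 0 := fun h => hA0 (h ▸ ha)
        have hneg : -lam = a * b := neg_eq_of_add_eq_zero_left habs
        rw [hneg, mul_comm a b, mul_assoc, mul_inv_cancel₀ ha0, mul_one]
      refine hdvd2 b n (fun j hj => hvanish b hQ j (by omega) (Or.inr hgood))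
  have hsumcount : ∑ b ∈ insert (0:F) B, P.roots.count b ≤ Multiset.card P.roots := by
    have hzero : ∀ b ∈ insert (0:F) B,
        b ∉ (insert (0:F) B).filter (· ∈ P.roots.toFinset) → P.roots.count b = 0 := by
      intro b hb hnb
      refine Multiset.count_eq_zero.mpr fun hmem => hnb ?_
      exact Finset.mem_filter.mpr ⟨hb, Multiset.mem_toFinset.mpr hmem⟩
    calc ∑ b ∈ insert (0:F) B, P.roots.count b
        = ∑ b ∈ (insert (0:F) B).filter (· ∈ P.roots.toFinset), P.roots.count b :=
          (Finset.sum_subset (Finset.filter_subset _ _) hzero).symm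
      _ ≤ ∑ b ∈ P.roots.toFinset, P.roots.count b := by
          refine Finset.sum_le_sum_of_subset fun b hb => ?_
          exact (Finset.mem_filter.mp hb).2
      _ = Multiset.card P.roots := Multiset.toFinset_sum_count_eq _
  have hcount : ∑ b ∈ insert (0:F) B, (if b ∈ I then k else n) ≤ N := by
    calc ∑ b ∈ insert (0:F) B, (if b ∈ I then k else n)
        ≤ ∑ b ∈ insert (0:F) B, P.roots.count b := Finset.sum_le_sum hmult
      _ ≤ Multiset.card P.roots := hsumcount
      _ ≤ P.natDegree := card_roots' P
      _ ≤ N := hPdeg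
  have h0I : (0:F) ∉ I := by
    rw [hI]
    intro hmem
    obtain ⟨a, ha, hval⟩ := Finset.mem_image.mp hmem
    have ha0 : a ≠ 0 := fun h => hA0 (h ▸ ha)
    rcases mul_eq_zero.mp hval with h | h
    · exact hlam0 (neg_eq_zero.mp h)
    · exact ha0 (inv_eq_zero.mp h)
  have hsum : ∑ b ∈ insert (0:F) B, (if b ∈ I then k else n)
      = n + ((B.filter (· ∈ I)).card * k + (B.filter (· ∉ I)).card * n) := by
    rw [Finset.sum_insert hB0, if_neg h0I]
    congr 1
    rw [Finset.sum_ite]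
    simp [Finset.sum_const, smul_eq_mul]
  have htcard : (B ∩ I) = B.filter (· ∈ I) := (Finset.filter_mem_eq_inter).symm
  have hpartition : (B.filter (· ∈ I)).card + (B.filter (· ∉ I)).card = B.card :=
    Finset.card_filter_add_card_filter_not (p := (· ∈ I))
  set t := (B.filter (· ∈ I)).card with ht
  set g := (B.filter (· ∉ I)).card with hg
  have hkey : n + (t * k + g * n) ≤ N := by rw [← hsum]; exact hcount
  have e1 : n * B.card + 1 + k = n + (t * k + g * n) + t := by
    rw [← hpartition, ← hkn]
    ring
  have hfinal : n * B.card + 1 + k ≤ k + s + t := by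
    rw [e1]
    omega
  have hint : (B ∩ I).card = t := by rw [htcard]
  omega
end

section
/- Let d ≥ 2, let p ≡ 1 (mod d) be a prime, and set S_d = {x^d : x ∈ F_p^*}. Let λ ∈ S_d. If there exist A, B ⊆ F_p^* with |A|, |B| ≥ 2 and A·B = (S_d − λ) \ {0}, then |A|·|B| = |S_d| − 1; in particular all products ab with a ∈ A, b ∈ B are distinct. -/
/-!
Put `m = |S_d| = (p - 1) / d`, so that the elements of `S_d` are `m`-th roots of unity. Trivially
`m - 1 = |A·B| ≤ |A||B|`; the converse bound is the Hanson–Petridis form of Stepanov's method,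
using only that every `λ + ab` is an `m`-th root of unity. With `N = A ∪ {0}` and the Lagrange
weights `w_a = ∏_{b ∈ N \ {a}} (a - b)⁻¹`, the polynomial `F = ∑_{a ∈ N} w_a (aX + λ)^(m + |A| - 1)`
has degree at most `m + |A| - 1`. Since `∑_{a ∈ N} w_a P(a)` is the coefficient of `X^|A|` in `P`
whenever `deg P ≤ |A|`, the coefficient of `X^|A|` in `F` is `binom(m + |A| - 1, |A|) λ^(m - 1)`,
nonzero because `m + |A| ≤ p`, while at every point `c` of `B ∪ {0}` the first `|A|` Taylor
coefficients of `F` vanish: there `(ac + λ)^m = 1` lowers the degree in `a` below `|A|`. Hence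
`(|B| + 1)|A| ≤ m + |A| - 1`.
-/

open Polynomial Finset

namespace Polynomial

variable {R : Type*}

theorem coeff_C_mul_X_add_C_pow [CommSemiring R] (a b : R) (n k : ℕ) :
    ((C a * X + C b) ^ n).coeff k = n.choose k * a ^ k * b ^ (n - k) := by
  have : (C a * X + C b) ^ n = ((X + C b) ^ n).comp (C a * X) := by
    rw [pow_comp, add_comp, X_comp, C_comp]
  rw [this, comp_C_mul_X_coeff, coeff_X_add_C_pow]
  ring

theorem X_sub_C_pow_dvd_of_coeff_taylor_eq_zero [CommRing R] {f : R[X]} {r : R} {n : ℕ}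
    (h : ∀ i < n, (taylor r f).coeff i = 0) : (X - C r) ^ n ∣ f := by
  obtain ⟨g, hg⟩ := X_pow_dvd_iff.mpr h
  refine ⟨taylor (-r) g, ?_⟩
  have := congrArg (taylor (-r)) hg
  rwa [taylor_taylor, neg_add_cancel, taylor_zero, taylor_mul, taylor_X_pow, C_neg,
    ← sub_eq_add_neg] at this

theorem card_mul_le_natDegree_of_forall_X_sub_C_pow_dvd [Field R]
    {f : R[X]} (hf : f ≠ 0) {s : Finset R} {n : ℕ} (h : ∀ c ∈ s, (X - C c) ^ n ∣ f) :
    #s * n ≤ f.natDegree := by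
  have hprod : ∏ c ∈ s, (X - C c) ^ n ∣ f :=
    Finset.prod_dvd_of_coprime (fun a _ b _ hab => (pairwise_coprime_X_sub_C
      Function.injective_id hab).pow) h
  have hdeg : (∏ c ∈ s, (X - C c) ^ n).natDegree = #s * n := by
    rw [natDegree_prod_of_monic s (fun c => (X - C c) ^ n) fun c _ => (monic_X_sub_C c).pow n]
    simp
  exact hdeg ▸ natDegree_le_of_dvd hprod hf

end Polynomial

theorem Nat.cast_choose_ne_zero_of_lt {K : Type*} [AddMonoidWithOne K] {p : ℕ} [CharP K p]
    (hp : p.Prime) {n k : ℕ} (hk : k ≤ n) (hn : n < p) : (n.choose k : K) ≠ 0 := by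
  rw [Ne, CharP.cast_eq_zero_iff K p]
  intro hdvd
  have : p ∣ n.factorial := hdvd.trans ⟨k.factorial * (n - k).factorial, by
    rw [← mul_assoc, Nat.choose_mul_factorial_mul_factorial hk]⟩
  exact absurd (hp.dvd_factorial.mp this) (by omega)

section Stepanov

variable {K : Type*} [Field K] [DecidableEq K]

noncomputable def stepanovPoly (N : Finset K) (lam : K) (n : ℕ) : K[X] :=
  ∑ a ∈ N, C (∏ b ∈ N.erase a, (a - b))⁻¹ * (C a * X + C lam) ^ n

theorem coeff_taylor_stepanovPoly (N : Finset K) (lam c : K) (n i : ℕ) :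
    (taylor c (stepanovPoly N lam n)).coeff i =
      n.choose i * ∑ a ∈ N, a ^ i * (a * c + lam) ^ (n - i) / ∏ b ∈ N.erase a, (a - b) := by
  have hshift : ∀ a : K, taylor c (C a * X + C lam) = C a * X + C (a * c + lam) := fun a => by
    rw [map_add, taylor_C, taylor_mul, taylor_C, taylor_X, C_add, C_mul]
    ring
  simp only [stepanovPoly, map_sum, taylor_mul, taylor_C, taylor_pow, hshift, finsetSum_coeff,
    coeff_C_mul, coeff_C_mul_X_add_C_pow, mul_sum]
  refine sum_congr rfl fun a _ => ?_
  ring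

theorem natDegree_stepanovPoly_le (N : Finset K) (lam : K) (n : ℕ) :
    (stepanovPoly N lam n).natDegree ≤ n := by
  refine natDegree_sum_le_of_forall_le _ _ fun a _ => (natDegree_C_mul_le _ _).trans ?_
  simpa using natDegree_pow_le_of_le n (natDegree_linear_le (a := a) (b := lam))

theorem sum_eval_div_prod_sub_eq_coeff (N : Finset K) {P : K[X]} (hP : P.natDegree < #N) :
    ∑ a ∈ N, P.eval a / ∏ b ∈ N.erase a, (a - b) = P.coeff (#N - 1) :=
  (Lagrange.coeff_eq_sum (v := id) (Set.injOn_id _)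
    (degree_le_natDegree.trans_lt (by exact_mod_cast hP))).symm

theorem stepanovPoly_ne_zero {N : Finset K} (hN : N.Nonempty) {lam : K} (hlam : lam ≠ 0)
    {n : ℕ} (hn : (n.choose (#N - 1) : K) ≠ 0) : stepanovPoly N lam n ≠ 0 := by
  intro h
  have hcoeff := coeff_taylor_stepanovPoly N lam 0 n (#N - 1)
  simp only [taylor_zero, h, coeff_zero, mul_zero, zero_add] at hcoeff
  have hdeg : (X ^ (#N - 1) * C (lam ^ (n - (#N - 1)))).natDegree < #N := by
    rw [natDegree_mul_C (pow_ne_zero _ hlam), natDegree_X_pow]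
    exact Nat.sub_lt hN.card_pos one_pos
  have hsum := sum_eval_div_prod_sub_eq_coeff N hdeg
  simp only [eval_mul, eval_C, eval_pow, eval_X, coeff_mul_C, coeff_X_pow_self, one_mul] at hsum
  rw [hsum] at hcoeff
  exact mul_ne_zero hn (pow_ne_zero _ hlam) hcoeff.symm

theorem X_sub_C_pow_dvd_stepanovPoly {N : Finset K} {lam c : K} {m r : ℕ} (hN : #N = r + 1)
    (h : ∀ a ∈ N, (a * c + lam) ^ m = 1) : (X - C c) ^ r ∣ stepanovPoly N lam (m + r - 1) := by
  refine X_sub_C_pow_dvd_of_coeff_taylor_eq_zero fun i hi => ?_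
  have hP : (X ^ i * (C c * X + C lam) ^ (r - 1 - i)).natDegree < r := by
    have h1 : (X ^ i : K[X]).natDegree ≤ i := natDegree_X_pow_le i
    have h2 : ((C c * X + C lam) ^ (r - 1 - i)).natDegree ≤ (r - 1 - i) * 1 :=
      natDegree_pow_le_of_le _ natDegree_linear_le
    have := natDegree_mul_le (p := (X ^ i : K[X])) (q := (C c * X + C lam) ^ (r - 1 - i))
    omega
  have hsum := sum_eval_div_prod_sub_eq_coeff N (P := X ^ i * (C c * X + C lam) ^ (r - 1 - i))
    (by omega)
  rw [hN, Nat.add_sub_cancel, coeff_eq_zero_of_natDegree_lt hP] at hsum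
  have hexp : m + r - 1 - i = m + (r - 1 - i) := by omega
  rw [coeff_taylor_stepanovPoly]
  refine mul_eq_zero_of_right _ ((sum_congr rfl fun a ha => ?_).trans hsum)
  simp only [eval_mul, eval_pow, eval_X, eval_add, eval_C, hexp, pow_add, h a ha, one_mul,
    mul_comm c]

end Stepanov

theorem card_mul_card_le_of_forall_add_mul_pow_eq_one {K : Type*} [Field K] {p : ℕ} [CharP K p]
    (hp : p.Prime) {m : ℕ} (hm : 1 ≤ m) {lam : K} (hlam : lam ^ m = 1) {A B : Finset K}
    (hA : 0 ∉ A) (hB : 0 ∉ B) (hsize : m + #A ≤ p)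
    (h : ∀ a ∈ A, ∀ b ∈ B, (lam + a * b) ^ m = 1) : #A * #B ≤ m - 1 := by
  classical
  set r := #A
  have hN : #(insert 0 A) = r + 1 := card_insert_of_notMem hA
  have hlam0 : lam ≠ 0 := by
    rintro rfl
    exact zero_ne_one ((zero_pow (by omega)).symm.trans hlam)
  have hF : stepanovPoly (insert 0 A) lam (m + r - 1) ≠ 0 :=
    stepanovPoly_ne_zero (insert_nonempty 0 A) hlam0
      (hN ▸ Nat.cast_choose_ne_zero_of_lt hp (by omega) (by omega))
  have hdvd : ∀ c ∈ insert 0 B, (X - C c) ^ r ∣ stepanovPoly (insert 0 A) lam (m + r - 1) := by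
    refine fun c hc => X_sub_C_pow_dvd_stepanovPoly hN fun a ha => ?_
    rcases mem_insert.mp ha with rfl | ha
    · simpa using hlam
    rcases mem_insert.mp hc with rfl | hc
    · simpa using hlam
    · rw [add_comm]
      exact h a ha c hc
  have hdeg := (card_mul_le_natDegree_of_forall_X_sub_C_pow_dvd hF hdvd).trans
    (natDegree_stepanovPoly_le _ _ _)
  rw [card_insert_of_notMem hB, add_one_mul] at hdeg
  rw [mul_comm]
  omega

section PowerSubgroup

variable {K : Type*} [Field K] [Fintype K] [DecidableEq K] {d : ℕ}

theorem card_filter_exists_pow_eq_mul (hd : d ∣ Fintype.card K - 1) :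
    #{y : K | ∃ x : K, x ≠ 0 ∧ x ^ d = y} * d = Fintype.card K - 1 := by
  have hset : (({y : K | ∃ x : K, x ≠ 0 ∧ x ^ d = y} : Finset K) : Set K) =
      Units.val '' ((powMonoidHom d : Kˣ →* Kˣ).range : Set Kˣ) := by
    ext y
    simpa using (Units.exists_iff_ne_zero (p := fun x : K => x ^ d = y)).symm
  have hunits : Nat.card Kˣ = Fintype.card K - 1 := by
    rw [Nat.card_eq_fintype_card, Fintype.card_units]
  have hcard := IsCyclic.card_powMonoidHom_range Kˣ d
  rw [hunits, Nat.gcd_eq_right hd] at hcard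
  have himage := Nat.card_image_of_injective Units.val_injective
    ((powMonoidHom d : Kˣ →* Kˣ).range : Set Kˣ)
  rw [← hset, Nat.card_coe_set_eq, Set.ncard_coe_finset] at himage
  rw [himage.trans hcard, Nat.div_mul_cancel hd]

theorem pow_card_filter_exists_pow_eq_one (hd : d ∣ Fintype.card K - 1) {y : K}
    (hy : y ∈ ({y : K | ∃ x : K, x ≠ 0 ∧ x ^ d = y} : Finset K)) :
    y ^ #{y : K | ∃ x : K, x ≠ 0 ∧ x ^ d = y} = 1 := by
  obtain ⟨x, hx, rfl⟩ := (mem_filter.mp hy).2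
  rw [← pow_mul, mul_comm, card_filter_exists_pow_eq_mul hd,
    FiniteField.pow_card_sub_one_eq_one x hx]

end PowerSubgroup

section ShiftedSet

variable {G : Type*} [AddCommGroup G] [DecidableEq G] {S : Finset G} {lam : G}

theorem card_erase_zero_image_sub (h : lam ∈ S) : #((S.image (· - lam)).erase 0) = #S - 1 := by
  have h0 : (0 : G) ∈ S.image (· - lam) := mem_image.mpr ⟨lam, h, sub_self lam⟩
  rw [card_erase_of_mem h0, card_image_of_injective S (sub_left_injective (b := lam))]

theorem add_mem_of_mem_erase_zero_image_sub {x : G} (hx : x ∈ (S.image (· - lam)).erase 0) :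
    lam + x ∈ S := by
  obtain ⟨s, hs, rfl⟩ := mem_image.mp (mem_of_mem_erase hx)
  rwa [add_sub_cancel]

end ShiftedSet

theorem multiplicative_decomposition_coSidon_general
    (d : ℕ) (hd : 2 ≤ d) (p : ℕ) [Fact p.Prime] (hp : p % d = 1)
    (lam : ZMod p) (hlam : ∃ x : ZMod p, x ≠ 0 ∧ x ^ d = lam)
    (A B : Finset (ZMod p)) (hA0 : (0 : ZMod p) ∉ A) (hB0 : (0 : ZMod p) ∉ B)
    (hB2 : 2 ≤ B.card)
    (hAB : Finset.image₂ (· * ·) A B =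
      ((Finset.univ.filter (fun y : ZMod p => ∃ x : ZMod p, x ≠ 0 ∧ x ^ d = y)).image
        (fun s => s - lam)).erase 0) :
    A.card * B.card =
      (Finset.univ.filter (fun y : ZMod p => ∃ x : ZMod p, x ≠ 0 ∧ x ^ d = y)).card - 1 ∧
    ∀ a ∈ A, ∀ b ∈ B, ∀ a' ∈ A, ∀ b' ∈ B, a * b = a' * b' → a = a' ∧ b = b' := by
  set S := Finset.univ.filter (fun y : ZMod p => ∃ x : ZMod p, x ≠ 0 ∧ x ^ d = y)
  have hdvd : d ∣ Fintype.card (ZMod p) - 1 := by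
    simpa [ZMod.card, hp] using Nat.dvd_sub_mod (n := d) p
  have hSd : #S * d = p - 1 := by simpa [ZMod.card] using card_filter_exists_pow_eq_mul hdvd
  have hlamS : lam ∈ S := mem_filter.mpr ⟨mem_univ _, hlam⟩
  have hT : #(image₂ (· * ·) A B) = #S - 1 := hAB ▸ card_erase_zero_image_sub hlamS
  have hpow : ∀ a ∈ A, ∀ b ∈ B, (lam + a * b) ^ #S = 1 := fun a ha b hb =>
    pow_card_filter_exists_pow_eq_one hdvd
      (add_mem_of_mem_erase_zero_image_sub (hAB ▸ mem_image₂_of_mem ha hb))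
  obtain ⟨b, hb⟩ := card_pos.mp (by omega : 0 < #B)
  have hA : #A ≤ #S - 1 :=
    hT ▸ card_le_card_image₂_right _ hb (mul_left_injective₀ fun h => hB0 (h ▸ hb))
  have hsize : #S + #A ≤ p := by
    have := Nat.mul_le_mul_left #S hd
    omega
  have hupper : #A * #B ≤ #S - 1 :=
    card_mul_card_le_of_forall_add_mul_pow_eq_one (m := #S) Fact.out (card_pos.mpr ⟨lam, hlamS⟩)
      (pow_card_filter_exists_pow_eq_one hdvd hlamS) hA0 hB0 hsize hpow
  have hcard : #(image₂ (· * ·) A B) = #A * #B := le_antisymm (card_image₂_le _ _ _) (hT ▸ hupper)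
  refine ⟨hcard ▸ hT, fun a ha b hb a' ha' b' hb' hab => ?_⟩
  simpa using card_image₂_iff.mp hcard (Set.mk_mem_prod ha hb) (Set.mk_mem_prod ha' hb') hab

/-- multiplicative decompositions of shifted d-th powers are co-Sidon. -/
theorem multiplicative_decomposition_coSidon
    (d : ℕ) (hd : 2 ≤ d) (p : ℕ) [Fact p.Prime] (hp : p % d = 1)
    (lam : ZMod p) (hlam : ∃ x : ZMod p, x ≠ 0 ∧ x ^ d = lam)
    (A B : Finset (ZMod p)) (hA0 : (0 : ZMod p) ∉ A) (hB0 : (0 : ZMod p) ∉ B)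
    (hA2 : 2 ≤ A.card) (hB2 : 2 ≤ B.card)
    (hAB : Finset.image₂ (· * ·) A B =
      ((Finset.univ.filter (fun y : ZMod p => ∃ x : ZMod p, x ≠ 0 ∧ x ^ d = y)).image
        (fun s => s - lam)).erase 0) :
    A.card * B.card =
      (Finset.univ.filter (fun y : ZMod p => ∃ x : ZMod p, x ≠ 0 ∧ x ^ d = y)).card - 1 ∧
    ∀ a ∈ A, ∀ b ∈ B, ∀ a' ∈ A, ∀ b' ∈ B, a * b = a' * b' → a = a' ∧ b = b' :=
  multiplicative_decomposition_coSidon_general d hd p hp lam hlam A B hA0 hB0 hB2 hAB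
end

section
/- Let d ≥ 2, let p ≡ 1 (mod d) be a prime, and let λ ∈ F_p^*. If A ⊆ F_p^* satisfies that ab + λ is 0 or a d-th power in F_p^* for all a, b ∈ A (including a = b), then |A| ≤ √((p−1)/d) + 1. Moreover, if λ itself is a d-th power in F_p^*, then |A| ≤ √((p−1)/d − 3/4) + 1/2. -/
open Polynomial Finset

theorem coeff_basis' {F : Type*} [Field F] [DecidableEq F] (S : Finset F) (a : F) (ha : a ∈ S) :
    (Lagrange.basis S id a).coeff (S.card - 1) = Lagrange.nodalWeight S id a := by
  have h : Lagrange.basis S id a = C (Lagrange.nodalWeight S id a) * Lagrange.nodal (S.erase a) id := by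
    simp_rw [Lagrange.basis, Lagrange.basisDivisor, Lagrange.nodalWeight, Lagrange.nodal,
      prod_mul_distrib, map_prod]
  rw [h, coeff_C_mul]
  have hd : (Lagrange.nodal (S.erase a) id).natDegree = S.card - 1 := by
    rw [Lagrange.natDegree_nodal, Finset.card_erase_of_mem ha]
  rw [← hd, Lagrange.nodal_monic.coeff_natDegree, mul_one]

theorem key_functional {F : Type*} [Field F] [DecidableEq F] (S : Finset F) (P : F[X])
    (hP : P.degree < (S.card : WithBot ℕ)) :
    ∑ a ∈ S, Lagrange.nodalWeight S id a * P.eval a = P.coeff (S.card - 1) := by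
  have h1 := Lagrange.eq_interpolate (v := id) (s := S) (f := P) (Set.injOn_id _) hP
  conv_rhs => rw [h1]
  rw [Lagrange.interpolate_apply, finset_sum_coeff]
  refine Finset.sum_congr rfl fun a ha => ?_
  rw [coeff_C_mul, coeff_basis' S a ha, id_eq, mul_comm]

theorem decomp {F : Type*} [Field F] (S : Finset F) (c : F → F) (lam b : F) (M : ℕ) :
    ∑ a ∈ S, C (c a) * (C a * X + C lam) ^ M
    = ∑ j ∈ Finset.range (M+1),
        C ((M.choose j : F) * ∑ a ∈ S, c a * (a ^ j * (a*b+lam) ^ (M-j))) * (X - C b) ^ j := by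
  have step : ∀ a : F, C (c a) * (C a * X + C lam) ^ M
      = ∑ j ∈ Finset.range (M+1),
          C (c a * (a ^ j * (a*b+lam) ^ (M-j)) * (M.choose j : F)) * (X - C b) ^ j := by
    intro a
    have h : C a * X + C lam = C a * (X - C b) + C (a*b+lam) := by
      rw [map_add, map_mul]; ring
    rw [h, add_pow, Finset.mul_sum]
    refine Finset.sum_congr rfl fun j hj => ?_
    rw [mul_pow, ← map_pow, ← map_pow, ← C_eq_natCast]
    simp only [map_mul]
    ring
  simp_rw [step]
  rw [Finset.sum_comm]
  refine Finset.sum_congr rfl fun j _ => ?_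
  rw [← Finset.sum_mul, ← map_sum]
  congr 1
  rw [Finset.mul_sum]
  congr 1
  refine Finset.sum_congr rfl fun a _ => by ring

theorem core_count (p : ℕ) [Fact p.Prime] (m N : ℕ) (hm : 1 ≤ m) (hN : 2 ≤ N)
    (hMp : m + (N - 2) < p) (lam : ZMod p) (hlam : lam ≠ 0)
    (S : Finset (ZMod p)) (hcard : S.card = N)
    (hS : ∀ a ∈ S, ∀ b ∈ S, a * b + lam = 0 ∨ (a * b + lam) ^ m = 1) :
    (N - 1) + ((insert (0 : ZMod p) S).card - 1) * (N - 2) ≤ m + (N - 2) := by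
  classical
  set t : ℕ := N - 2 with ht
  set M : ℕ := m + t with hM
  let c : ZMod p → ZMod p := fun a => Lagrange.nodalWeight S id a
  let F : Polynomial (ZMod p) := ∑ a ∈ S, C (c a) * (C a * X + C lam) ^ M
  let W : ℕ → ZMod p → ZMod p :=
    fun j b => (M.choose j : ZMod p) * ∑ a ∈ S, c a * (a ^ j * (a*b+lam) ^ (M-j))
  have hdec : ∀ b, F = ∑ j ∈ Finset.range (M+1), C (W j b) * (X - C b) ^ j :=
    fun b => decomp S c lam b M
  have hdeg_of : ∀ P : (ZMod p)[X], P.natDegree < N → P.degree < (S.card : WithBot ℕ) := by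
    intro P h
    refine lt_of_le_of_lt P.degree_le_natDegree ?_
    rw [hcard]
    exact_mod_cast h
  have hkey : ∀ P : (ZMod p)[X], P.natDegree < N →
      ∑ a ∈ S, c a * P.eval a = P.coeff (N - 1) := by
    intro P hP
    rw [key_functional S P (hdeg_of P hP), hcard]
  -- vanishing of W
  have hWvan : ∀ b ∈ insert (0 : ZMod p) S, ∀ j : ℕ,
      j + 2 + (if ∃ a ∈ S, a * b + lam = 0 then 1 else 0) ≤ N → W j b = 0 := by
    intro b hb j hj
    show (M.choose j : ZMod p) * ∑ a ∈ S, c a * (a ^ j * (a*b+lam) ^ (M-j)) = 0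
    rcases eq_or_ne b 0 with rfl | hb0
    · have hgood : ¬ ∃ a ∈ S, a * (0:ZMod p) + lam = 0 := by
        rintro ⟨a, -, ha⟩
        rw [mul_zero, zero_add] at ha
        exact hlam ha
      rw [if_neg hgood] at hj
      have heq : ∑ a ∈ S, c a * (a ^ j * (a * 0 + lam) ^ (M-j)) =
          ∑ a ∈ S, c a * Polynomial.eval a (C (lam ^ (M-j)) * X ^ j) := by
        refine Finset.sum_congr rfl fun a _ => ?_
        simp [mul_comm]
      rw [heq, hkey _ (lt_of_le_of_lt (natDegree_C_mul_X_pow_le _ _) (by omega)),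
        coeff_C_mul, coeff_X_pow, if_neg (by omega), mul_zero, mul_zero]
    · have hbS : b ∈ S := by
        rcases Finset.mem_insert.mp hb with h | h
        · exact absurd h hb0
        · exact h
      set P : (ZMod p)[X] := X ^ j * (C b * X + C lam) ^ (t - j) with hP
      have hjt : j + (if ∃ a ∈ S, a * b + lam = 0 then 1 else 0) ≤ t := by
        rcases em (∃ a ∈ S, a * b + lam = 0) with hc | hc
        · rw [if_pos hc] at hj ⊢; omega
        · rw [if_neg hc] at hj ⊢; omega
      have hPdeg : P.natDegree ≤ t := by
        refine le_trans (natDegree_mul_le) ?_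
        have h1 : (X ^ j : (ZMod p)[X]).natDegree ≤ j := natDegree_X_pow_le j
        have h2 : ((C b * X + C lam) ^ (t-j) : (ZMod p)[X]).natDegree ≤ (t-j) := by
          refine le_trans (natDegree_pow_le) ?_
          have := natDegree_linear_le (a := b) (b := lam)
          nlinarith [this]
        omega
      have hterm : ∀ a ∈ S, a ^ j * (a*b+lam) ^ (M-j) = P.eval a := by
        intro a ha
        have hev : P.eval a = a ^ j * (b*a+lam) ^ (t-j) := by
          simp [hP]
        rw [hev, mul_comm b a]
        rcases hS a ha b hbS with h0 | h1
        · have h1j : 1 ≤ t - j ∧ 1 ≤ M - j := by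
            have : ∃ a ∈ S, a * b + lam = 0 := ⟨a, ha, h0⟩
            rw [if_pos this] at hjt
            constructor <;> omega
          rw [h0, zero_pow (by omega), zero_pow (by omega)]
        · have hMj : M - j = m + (t - j) := by omega
          rw [hMj, pow_add, h1, one_mul]
      rw [Finset.sum_congr rfl fun a ha => by rw [hterm a ha]]
      rw [hkey P (lt_of_le_of_lt hPdeg (by omega)),
        coeff_eq_zero_of_natDegree_lt (lt_of_le_of_lt hPdeg (by omega)), mul_zero]
  -- F is not zero
  have hNM : N - 1 ≤ M := by omega
  have hcoeffF : F.coeff (N-1) = W (N-1) 0 := by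
    rw [hdec 0, finset_sum_coeff]
    simp only [map_zero, sub_zero, coeff_C_mul, coeff_X_pow]
    rw [Finset.sum_eq_single_of_mem (N-1) (Finset.mem_range.mpr (by omega))
      (fun j _ hne => by rw [if_neg (fun h => hne h.symm), mul_zero]), if_pos rfl, mul_one]
  have hWne : W (N-1) 0 ≠ 0 := by
    have hchoose : (M.choose (N-1) : ZMod p) ≠ 0 := by
      rw [Ne, ZMod.natCast_eq_zero_iff]
      intro hdvd
      have h1 : p ∣ M.factorial := by
        refine hdvd.trans ⟨(N-1).factorial * (M-(N-1)).factorial, ?_⟩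
        rw [← Nat.choose_mul_factorial_mul_factorial hNM]
        ring
      exact absurd ((Nat.Prime.dvd_factorial (Fact.out)).mp h1) (by omega)
    have hsum : ∑ a ∈ S, c a * (a ^ (N-1) * (a * 0 + lam) ^ (M-(N-1))) = lam ^ (M-(N-1)) := by
      have heq : ∑ a ∈ S, c a * (a ^ (N-1) * (a * 0 + lam) ^ (M-(N-1))) =
          ∑ a ∈ S, c a * Polynomial.eval a (C (lam ^ (M-(N-1))) * X ^ (N-1)) := by
        refine Finset.sum_congr rfl fun a _ => ?_
        simp [mul_comm]
      rw [heq, hkey _ (lt_of_le_of_lt (natDegree_C_mul_X_pow_le _ _) (by omega)),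
        coeff_C_mul, coeff_X_pow, if_pos rfl, mul_one]
    show (M.choose (N-1) : ZMod p) * _ ≠ 0
    rw [hsum]
    exact mul_ne_zero hchoose (pow_ne_zero _ hlam)
  have hFne : F ≠ 0 := fun h => hWne (by rw [← hcoeffF, h, coeff_zero])
  -- divisibility
  have hdvd : ∀ b ∈ insert (0:ZMod p) S,
      (X - C b) ^ (N - 1 - (if ∃ a ∈ S, a * b + lam = 0 then 1 else 0)) ∣ F := by
    intro b hb
    rw [hdec b]
    refine Finset.dvd_sum fun j hj => ?_
    by_cases hlt : j < N - 1 - (if ∃ a ∈ S, a * b + lam = 0 then 1 else 0)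
    · have : W j b = 0 := by
        refine hWvan b hb j ?_
        rcases em (∃ a ∈ S, a * b + lam = 0) with hc | hc
        · rw [if_pos hc] at hlt ⊢; omega
        · rw [if_neg hc] at hlt ⊢; omega
      rw [this, map_zero, zero_mul]
      exact dvd_zero _
    · exact Dvd.dvd.mul_left (pow_dvd_pow _ (by omega)) _
  have hmult : ∀ b ∈ insert (0:ZMod p) S,
      (N - 1 - (if ∃ a ∈ S, a * b + lam = 0 then 1 else 0)) ≤ F.rootMultiplicity b :=
    fun b hb => (le_rootMultiplicity_iff hFne).mpr (hdvd b hb)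
  -- degree bound
  have hdegF : F.natDegree ≤ M := by
    rw [hdec 0]
    refine natDegree_sum_le_of_forall_le _ _ fun j hj => ?_
    refine le_trans natDegree_mul_le ?_
    have h1 : (C (W j 0)).natDegree = 0 := natDegree_C _
    have h2 : ((X - C (0:ZMod p)) ^ j).natDegree ≤ j := by
      refine le_trans natDegree_pow_le ?_
      have := natDegree_X_sub_C_le (0:ZMod p)
      nlinarith
    have := Finset.mem_range.mp hj
    omega
  -- sum of multiplicities
  have hsummult : ∑ b ∈ insert (0:ZMod p) S, F.rootMultiplicity b ≤ M := by
    calc ∑ b ∈ insert (0:ZMod p) S, F.rootMultiplicity b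
        = ∑ b ∈ insert (0:ZMod p) S, F.roots.count b := by
          refine Finset.sum_congr rfl fun b _ => (count_roots F).symm
      _ ≤ ∑ b ∈ F.roots.toFinset, F.roots.count b := by
          refine Finset.sum_le_sum_of_ne_zero fun b _ hne => ?_
          rw [Multiset.mem_toFinset, ← Multiset.count_pos]
          omega
      _ = Multiset.card F.roots := F.roots.toFinset_sum_count_eq
      _ ≤ F.natDegree := F.card_roots'
      _ ≤ M := hdegF
  -- final count
  have h0mem : (0:ZMod p) ∈ insert (0:ZMod p) S := Finset.mem_insert_self _ _
  have h0good : (if ∃ a ∈ S, a * (0:ZMod p) + lam = 0 then 1 else 0) = 0 := by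
    rw [if_neg]
    rintro ⟨a, -, ha⟩
    rw [mul_zero, zero_add] at ha
    exact hlam ha
  have hlow : (N - 1) + ((insert (0:ZMod p) S).card - 1) * t ≤
      ∑ b ∈ insert (0:ZMod p) S, F.rootMultiplicity b := by
    rw [← Finset.add_sum_erase _ _ h0mem]
    have hK0 : N - 1 ≤ F.rootMultiplicity 0 := by
      have := hmult 0 h0mem
      rw [h0good] at this
      omega
    have hrest : ((insert (0:ZMod p) S).card - 1) * t ≤
        ∑ b ∈ (insert (0:ZMod p) S).erase 0, F.rootMultiplicity b := by
      rw [← Finset.card_erase_of_mem h0mem]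
      rw [← smul_eq_mul]
      refine Finset.card_nsmul_le_sum _ _ _ fun b hb => ?_
      have := hmult b (Finset.mem_of_mem_erase hb)
      split at this <;> omega
    omega
  omega

theorem linear_bound (p : ℕ) [Fact p.Prime] (m : ℕ) (hm : 1 ≤ m) (lam : ZMod p)
    (S : Finset (ZMod p)) (a0 : ZMod p) (ha0 : a0 ∈ S) (ha00 : a0 ≠ 0)
    (hS : ∀ a ∈ S, ∀ b ∈ S, a * b + lam = 0 ∨ (a * b + lam) ^ m = 1) :
    S.card ≤ m + 1 := by
  classical
  have hinj : Set.InjOn (fun b => a0 * b + lam) S := by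
    intro x _ y _ hxy
    simp only at hxy
    exact mul_left_cancel₀ ha00 (by linear_combination hxy)
  have himg : S.image (fun b => a0 * b + lam) ⊆
      insert 0 (Polynomial.nthRoots m (1 : ZMod p)).toFinset := by
    intro y hy
    obtain ⟨b, hb, rfl⟩ := Finset.mem_image.mp hy
    rcases hS a0 ha0 b hb with h | h
    · exact Finset.mem_insert.mpr (Or.inl h)
    · refine Finset.mem_insert.mpr (Or.inr ?_)
      rw [Multiset.mem_toFinset, Polynomial.mem_nthRoots hm]
      exact h
  calc S.card = (S.image (fun b => a0 * b + lam)).card :=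
        (Finset.card_image_of_injOn hinj).symm
    _ ≤ (insert 0 (Polynomial.nthRoots m (1 : ZMod p)).toFinset).card :=
        Finset.card_le_card himg
    _ ≤ (Polynomial.nthRoots m (1 : ZMod p)).toFinset.card + 1 :=
        Finset.card_insert_le _ _
    _ ≤ m + 1 := by
        have h1 := Multiset.toFinset_card_le (Polynomial.nthRoots m (1 : ZMod p))
        have h2 := Polynomial.card_nthRoots m (1 : ZMod p)
        omega

/-- improved bound for strong Diophantine tuples over prime fields. -/
theorem strong_diophantine_prime_field_bound
    (d : ℕ) (hd : 2 ≤ d) (p : ℕ) [Fact p.Prime] (hp : p % d = 1)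
    (lam : ZMod p) (hlam : lam ≠ 0)
    (A : Finset (ZMod p)) (hA0 : (0 : ZMod p) ∉ A)
    (hprop : ∀ a ∈ A, ∀ b ∈ A,
      a * b + lam = 0 ∨ ∃ x : ZMod p, x ≠ 0 ∧ x ^ d = a * b + lam) :
    (A.card : ℝ) ≤ Real.sqrt (((p : ℝ) - 1) / d) + 1 ∧
    ((∃ x : ZMod p, x ≠ 0 ∧ x ^ d = lam) →
      (A.card : ℝ) ≤ Real.sqrt (((p : ℝ) - 1) / d - 3 / 4) + 1 / 2) := by
  classical
  have hp' : p.Prime := Fact.out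
  have hp2 : 2 ≤ p := hp'.two_le
  have hne2 : p ≠ 2 := by
    rintro rfl
    rcases Nat.lt_or_ge d 3 with hd3 | hd3
    · interval_cases d
      · norm_num at hp
    · rw [Nat.mod_eq_of_lt (by omega)] at hp
      omega
  have hp3 : 3 ≤ p := by omega
  set m := (p - 1) / d with hmdef
  have hdvd : d ∣ p - 1 := by
    have := Nat.dvd_sub_mod (n := d) p
    rwa [hp] at this
  have hdm : d * m = p - 1 := Nat.mul_div_cancel' hdvd
  have hm1 : 1 ≤ m := by
    rcases Nat.eq_zero_or_pos m with h | h
    · rw [h, mul_zero] at hdm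
      omega
    · exact h
  have h2m : 2 * m ≤ p - 1 := by
    calc 2 * m ≤ d * m := Nat.mul_le_mul_right m hd
      _ = p - 1 := hdm
  have hpow : ∀ y : ZMod p, (∃ x : ZMod p, x ≠ 0 ∧ x ^ d = y) → y ^ m = 1 := by
    rintro y ⟨x, hx0, rfl⟩
    rw [← pow_mul, hdm]
    exact ZMod.pow_card_sub_one_eq_one hx0
  have hS' : ∀ a ∈ A, ∀ b ∈ A, a * b + lam = 0 ∨ (a * b + lam) ^ m = 1 :=
    fun a ha b hb => (hprop a ha b hb).imp id (hpow _)
  have hmr : ((p : ℝ) - 1) / d = (m : ℝ) := by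
    have h1 : ((d : ℝ)) * m = (p : ℝ) - 1 := by
      have h2 : ((d * m : ℕ) : ℝ) = ((p - 1 : ℕ) : ℝ) := by rw [hdm]
      rwa [Nat.cast_mul, Nat.cast_sub (by omega), Nat.cast_one] at h2
    rw [← h1]
    have hd0 : (d : ℝ) ≠ 0 := by positivity
    field_simp
  rw [hmr]
  constructor
  · -- general bound
    by_cases hn : A.card ≤ 1
    · have h1 : (A.card : ℝ) ≤ 1 := by exact_mod_cast hn
      have := Real.sqrt_nonneg (m : ℝ)
      linarith
    · push_neg at hn
      obtain ⟨a0, ha0⟩ := Finset.card_pos.mp (by omega : 0 < A.card)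
      have ha00 : a0 ≠ 0 := fun h => hA0 (h ▸ ha0)
      have hlin : A.card ≤ m + 1 := linear_bound p m hm1 lam A a0 ha0 ha00 hS'
      have hMp : m + (A.card - 2) < p := by omega
      have hcore := core_count p m A.card hm1 hn hMp lam hlam A rfl hS'
      rw [Finset.card_insert_of_notMem hA0] at hcore
      zify [show (1:ℕ) ≤ A.card by omega, show (2:ℕ) ≤ A.card by omega,
        show (1:ℕ) ≤ A.card + 1 by omega, show (2:ℕ) ≤ A.card + 1 by omega] at hcore
      have hsq : ((A.card : ℤ) - 1) ^ 2 ≤ (m : ℤ) := by nlinarith [hcore]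
      have hsqr : ((A.card : ℝ) - 1) ≤ Real.sqrt m := by
        rw [Real.le_sqrt (by
          have : (2 : ℝ) ≤ (A.card : ℝ) := by exact_mod_cast hn
          linarith) (by positivity)]
        exact_mod_cast hsq
      linarith
  · rintro hx
    by_cases hn : A.card = 0
    · rw [hn]
      have := Real.sqrt_nonneg ((m : ℝ) - 3 / 4)
      push_cast
      linarith
    · have hn1 : 1 ≤ A.card := by omega
      set S : Finset (ZMod p) := insert 0 A with hSdef
      have hcardS : S.card = A.card + 1 := Finset.card_insert_of_notMem hA0
      have hSS : ∀ a ∈ S, ∀ b ∈ S, a * b + lam = 0 ∨ (a * b + lam) ^ m = 1 := by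
        intro a ha b hb
        rcases Finset.mem_insert.mp ha with rfl | ha'
        · right; rw [zero_mul, zero_add]; exact hpow lam hx
        · rcases Finset.mem_insert.mp hb with rfl | hb'
          · right; rw [mul_zero, zero_add]; exact hpow lam hx
          · exact hS' a ha' b hb'
      obtain ⟨a0, ha0⟩ := Finset.card_pos.mp (by omega : 0 < A.card)
      have ha00 : a0 ≠ 0 := fun h => hA0 (h ▸ ha0)
      have hlin : S.card ≤ m + 1 :=
        linear_bound p m hm1 lam S a0 (Finset.mem_insert_of_mem ha0) ha00 hSS
      have hMp : m + (S.card - 2) < p := by omega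
      have hcore := core_count p m S.card hm1 (by omega) hMp lam hlam S rfl hSS
      have hins : insert (0 : ZMod p) S = S :=
        Finset.insert_eq_self.mpr (Finset.mem_insert_self _ _)
      rw [hins] at hcore
      zify [show (1:ℕ) ≤ S.card by omega, show (2:ℕ) ≤ S.card by omega] at hcore
      rw [hcardS] at hcore
      push_cast at hcore
      have hsq : ((A.card : ℤ)) ^ 2 - (A.card : ℤ) + 1 ≤ (m : ℤ) := by nlinarith [hcore]
      have hsqr : ((A.card : ℝ) - 1 / 2) ≤ Real.sqrt ((m : ℝ) - 3 / 4) := by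
      -- x ≥ 0 and x^2 ≤ y
        have hA1 : (1 : ℝ) ≤ (A.card : ℝ) := by exact_mod_cast hn1
        have hm1r : (1 : ℝ) ≤ (m : ℝ) := by exact_mod_cast hm1
        rw [Real.le_sqrt (by linarith) (by linarith)]
        have hsqr' : ((A.card : ℝ)) ^ 2 - (A.card : ℝ) + 1 ≤ (m : ℝ) := by exact_mod_cast hsq
        nlinarith [hsqr']
      linarith
end

section
/- Let d ≥ 2, let q ≡ 1 (mod d) be a prime power, λ ∈ F_q^*, and S_d = {x^d : x ∈ F_q^*}. Suppose A ⊆ F_q^* satisfies ab + λ ∈ S_d ∪ {0} for all distinct a, b ∈ A, but there exists some a ∈ A with a² + λ ∉ S_d ∪ {0}. Then |A| ≤ √(2(q−1)/d) + 4. -/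
open Polynomial Finset

namespace RestrictedProductAux

variable {F : Type*} [Field F]

/-- Stepanov auxiliary polynomial building block. -/
noncomputable def Upoly (lam : F) (k m : ℕ) (a : F) : F[X] :=
  (C a * X + C lam) ^ (k + m) - (C a * X + C lam) ^ k

noncomputable def Bcoef (k m i : ℕ) : F := ((k + m).choose i : F) - (k.choose i : F)

noncomputable def Apoly (lam : F) (k m e : ℕ) (a b : F) : F[X] :=
  ∑ i ∈ range e, C (Bcoef k m i * a ^ i * (a * b + lam) ^ (k - i)) * (X - C b) ^ i

noncomputable def fpoly (lam : F) (k m : ℕ) (P : Finset F) (c : F → F) : F[X] :=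
  ∑ a ∈ P, C (c a) * Upoly lam k m a * (X - C a) ^ k

/-- expansion of `(C a * X + C lam)^N` around `b`. -/
lemma sub1 (a lam b : F) (N : ℕ) :
    (C a * X + C lam) ^ N =
      ∑ i ∈ range (N + 1),
        C ((N.choose i : F) * a ^ i * (a * b + lam) ^ (N - i)) * (X - C b) ^ i := by
  have h : C a * X + C lam = C a * (X - C b) + C (a * b + lam) := by
    rw [map_add, map_mul]; ring
  rw [h, add_pow]
  refine Finset.sum_congr rfl fun i hi => ?_
  rw [mul_pow, ← C_pow, ← C_pow, map_mul, map_mul, map_natCast]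
  ring

lemma sub2 (a : F) (N : ℕ) :
    (X - C a) ^ N = ∑ i ∈ range (N + 1), C ((N.choose i : F) * (-a) ^ (N - i)) * X ^ i := by
  rw [sub_eq_add_neg, ← C_neg, add_pow]
  refine Finset.sum_congr rfl fun i hi => ?_
  rw [← C_pow, map_mul, map_natCast]
  ring

lemma scalar_lemma {k : ℕ} {P : Finset F} {c : F → F}
    (HM : ∀ t ≤ 2 * k, ∑ a ∈ P, c a * a ^ t = 0)
    (g : F[X]) (hg : g.natDegree ≤ 2 * k) :
    ∑ a ∈ P, c a * g.eval a = 0 := by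
  have he : ∀ a : F, g.eval a = ∑ t ∈ range (2 * k + 1), g.coeff t * a ^ t := by
    intro a
    exact eval_eq_sum_range' (Nat.lt_succ_of_le hg) a
  calc ∑ a ∈ P, c a * g.eval a
      = ∑ a ∈ P, ∑ t ∈ range (2 * k + 1), g.coeff t * (c a * a ^ t) := by
        refine Finset.sum_congr rfl fun a _ => ?_
        rw [he a, Finset.mul_sum]
        exact Finset.sum_congr rfl fun t _ => by ring
    _ = ∑ t ∈ range (2 * k + 1), g.coeff t * ∑ a ∈ P, c a * a ^ t := by
        rw [Finset.sum_comm]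
        exact Finset.sum_congr rfl fun t _ => by rw [Finset.mul_sum]
    _ = 0 := by
        refine Finset.sum_eq_zero fun t ht => ?_
        rw [HM t (Nat.lt_succ_iff.mp (Finset.mem_range.mp ht)), mul_zero]

lemma SC {k : ℕ} {P : Finset F} {c : F → F} (lam : F)
    (HM : ∀ t ≤ 2 * k, ∑ a ∈ P, c a * a ^ t = 0)
    (b : F) (i j : ℕ) (hi : i ≤ k) (hj : j ≤ k) :
    ∑ a ∈ P, c a * (a ^ (i + j) * (a * b + lam) ^ (k - i)) = 0 := by
  have h := scalar_lemma HM (X ^ (i + j) * (C b * X + C lam) ^ (k - i)) ?_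
  · rw [← h]
    refine Finset.sum_congr rfl fun a _ => ?_
    simp [mul_comm b a]
  · calc (X ^ (i + j) * (C b * X + C lam) ^ (k - i)).natDegree
        ≤ (X ^ (i+j) : F[X]).natDegree + ((C b * X + C lam) ^ (k - i)).natDegree :=
          natDegree_mul_le
      _ ≤ (i + j) + (k - i) * 1 := by
          refine add_le_add (le_of_eq (natDegree_X_pow _)) ?_
          refine natDegree_pow_le.trans ?_
          refine Nat.mul_le_mul_left _ ?_
          refine (natDegree_add_le _ _).trans ?_
          simp [natDegree_C]
          exact (natDegree_C_mul_le _ _).trans (by simp)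
      _ ≤ 2 * k := by omega

lemma split_lemma (lam : F) (k m : ℕ) (a b : F) (e : ℕ) (hek : k ≤ e) (hek' : e ≤ k + 1)
    (hs : ∀ i, i < e → (a * b + lam) ^ (k + m - i) = (a * b + lam) ^ (k - i)) :
    (X - C b) ^ e ∣ Upoly lam k m a - Apoly lam k m e a b := by
  have h1 := sub1 a lam b (k + m)
  have h2 := sub1 a lam b k
  rw [Upoly, h1, h2]
  rw [← Finset.sum_range_add_sum_Ico _ (show e ≤ k + m + 1 by omega),
      ← Finset.sum_range_add_sum_Ico _ (show e ≤ k + 1 by omega)]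
  have hA : Apoly lam k m e a b =
      (∑ i ∈ range e, C (((k+m).choose i : F) * a ^ i * (a*b+lam) ^ (k + m - i)) * (X - C b) ^ i)
      - (∑ i ∈ range e, C ((k.choose i : F) * a ^ i * (a*b+lam) ^ (k - i)) * (X - C b) ^ i) := by
    rw [Apoly, ← Finset.sum_sub_distrib]
    refine Finset.sum_congr rfl fun i hi => ?_
    rw [hs i (Finset.mem_range.mp hi), ← sub_mul, ← map_sub]
    congr 2
    rw [Bcoef]; ring
  rw [hA]
  have : (∑ i ∈ range e, C (((k+m).choose i:F) * a ^ i * (a*b+lam) ^ (k+m-i)) * (X - C b) ^ i)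
        + (∑ i ∈ Finset.Ico e (k+m+1), C (((k+m).choose i:F) * a ^ i * (a*b+lam) ^ (k+m-i)) * (X - C b) ^ i)
        - (((∑ i ∈ range e, C ((k.choose i:F) * a ^ i * (a*b+lam) ^ (k-i)) * (X - C b) ^ i))
          + (∑ i ∈ Finset.Ico e (k+1), C ((k.choose i:F) * a ^ i * (a*b+lam) ^ (k-i)) * (X - C b) ^ i))
        - ((∑ i ∈ range e, C (((k+m).choose i:F) * a ^ i * (a*b+lam) ^ (k+m-i)) * (X - C b) ^ i)
          - (∑ i ∈ range e, C ((k.choose i:F) * a ^ i * (a*b+lam) ^ (k-i)) * (X - C b) ^ i))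
      = (∑ i ∈ Finset.Ico e (k+m+1), C (((k+m).choose i:F) * a ^ i * (a*b+lam) ^ (k+m-i)) * (X - C b) ^ i)
        - (∑ i ∈ Finset.Ico e (k+1), C ((k.choose i:F) * a ^ i * (a*b+lam) ^ (k-i)) * (X - C b) ^ i) := by
    ring
  rw [this]
  refine dvd_sub ?_ ?_ <;>
  · refine Finset.dvd_sum fun i hi => ?_
    have hie : e ≤ i := (Finset.mem_Ico.mp hi).1
    have : (X - C b) ^ i = (X - C b) ^ e * (X - C b) ^ (i - e) := by
      rw [← pow_add]; congr 1; omega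
    rw [this]
    exact Dvd.dvd.mul_left (dvd_mul_right _ _) _

lemma innerZero {k : ℕ} {P : Finset F} {c : F → F} (lam : F)
    (HM : ∀ t ≤ 2 * k, ∑ a ∈ P, c a * a ^ t = 0)
    (b : F) (i : ℕ) (hi : i ≤ k) :
    ∑ a ∈ P, C (c a * (a ^ i * (a * b + lam) ^ (k - i))) * (X - C a) ^ k = 0 := by
  calc ∑ a ∈ P, C (c a * (a ^ i * (a * b + lam) ^ (k - i))) * (X - C a) ^ k
      = ∑ a ∈ P, ∑ i' ∈ range (k + 1),
          C ((k.choose i' : F) * (-1 : F) ^ (k - i') *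
            (c a * (a ^ (i + (k - i')) * (a * b + lam) ^ (k - i)))) * X ^ i' := by
        refine Finset.sum_congr rfl fun a _ => ?_
        rw [sub2 a k, Finset.mul_sum]
        refine Finset.sum_congr rfl fun i' _ => ?_
        rw [← mul_assoc, ← map_mul]
        congr 2
        rw [neg_pow, pow_add]
        ring
    _ = ∑ i' ∈ range (k + 1),
          C ((k.choose i' : F) * (-1 : F) ^ (k - i') *
            (∑ a ∈ P, c a * (a ^ (i + (k - i')) * (a * b + lam) ^ (k - i)))) * X ^ i' := by
        rw [Finset.sum_comm]
        refine Finset.sum_congr rfl fun i' _ => ?_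
        rw [Finset.mul_sum, ← Finset.sum_mul, ← map_sum]
    _ = 0 := by
        refine Finset.sum_eq_zero fun i' _ => ?_
        rw [SC lam HM b i (k - i') hi (by omega), mul_zero, map_zero, zero_mul]

lemma Wzero {k : ℕ} {P : Finset F} {c : F → F} (lam : F) (m : ℕ)
    (HM : ∀ t ≤ 2 * k, ∑ a ∈ P, c a * a ^ t = 0)
    (b : F) (e : ℕ) (he : e ≤ k + 1) :
    ∑ a ∈ P, C (c a) * Apoly lam k m e a b * (X - C a) ^ k = 0 := by
  calc ∑ a ∈ P, C (c a) * Apoly lam k m e a b * (X - C a) ^ k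
      = ∑ a ∈ P, ∑ i ∈ range e, (C (Bcoef k m i) * (X - C b) ^ i) *
          (C (c a * (a ^ i * (a * b + lam) ^ (k - i))) * (X - C a) ^ k) := by
        refine Finset.sum_congr rfl fun a _ => ?_
        rw [Apoly, Finset.mul_sum, Finset.sum_mul]
        refine Finset.sum_congr rfl fun i _ => ?_
        simp only [map_mul]
        ring
    _ = ∑ i ∈ range e, (C (Bcoef k m i) * (X - C b) ^ i) *
          (∑ a ∈ P, C (c a * (a ^ i * (a * b + lam) ^ (k - i))) * (X - C a) ^ k) := by
        rw [Finset.sum_comm]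
        refine Finset.sum_congr rfl fun i _ => ?_
        rw [Finset.mul_sum]
    _ = 0 := by
        refine Finset.sum_eq_zero fun i hi => ?_
        rw [innerZero lam HM b i (by have := Finset.mem_range.mp hi; omega), mul_zero]

section Engine
variable {k m : ℕ} {P : Finset F} {c : F → F} {lam : F}

lemma fpoly_sub (HM : ∀ t ≤ 2 * k, ∑ a ∈ P, c a * a ^ t = 0) (b : F) (e : ℕ)
    (he : e ≤ k + 1) :
    fpoly lam k m P c =
      ∑ a ∈ P, C (c a) * (Upoly lam k m a - Apoly lam k m e a b) * (X - C a) ^ k := by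
  have hW := Wzero lam m HM b e he
  rw [fpoly, ← sub_zero (∑ a ∈ P, C (c a) * Upoly lam k m a * (X - C a) ^ k), ← hW,
    ← Finset.sum_sub_distrib]
  refine Finset.sum_congr rfl fun a _ => ?_
  ring

lemma E1 (HM : ∀ t ≤ 2 * k, ∑ a ∈ P, c a * a ^ t = 0) (hk : 1 ≤ k) (b : F)
    (hb : ∀ a ∈ P, a ≠ b → (a * b + lam) ^ (m + 1) = a * b + lam) :
    (X - C b) ^ k ∣ fpoly lam k m P c := by
  rw [fpoly_sub HM b k (by omega)]
  refine Finset.dvd_sum fun a ha => ?_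
  by_cases hab : a = b
  · subst hab
    exact dvd_mul_left _ _
  · have hs : ∀ i, i < k → (a * b + lam) ^ (k + m - i) = (a * b + lam) ^ (k - i) := by
      intro i hik
      calc (a * b + lam) ^ (k + m - i)
          = (a * b + lam) ^ (m + 1) * (a * b + lam) ^ (k - i - 1) := by
            rw [← pow_add]; congr 1; omega
        _ = (a * b + lam) * (a * b + lam) ^ (k - i - 1) := by rw [hb a ha hab]
        _ = (a * b + lam) ^ (k - i) := by
            rw [← pow_succ']; congr 1; omega
    have hdv := split_lemma lam k m a b k le_rfl (by omega) hs
    exact (hdv.mul_left (C (c a))).mul_right _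

lemma E2 (HM : ∀ t ≤ 2 * k, ∑ a ∈ P, c a * a ^ t = 0) (hk : 1 ≤ k) (a0 : F) (ha0 : a0 ∈ P)
    (hs1 : ∀ a ∈ P, a ≠ a0 → (a * a0 + lam) ^ m = 1)
    (hcert : c a0 * ((a0 * a0 + lam) ^ (k + m) - (a0 * a0 + lam) ^ k) ≠ 0) :
    ¬ (X - C a0) ^ (k + 1) ∣ fpoly lam k m P c := by
  classical
  intro hdvd
  rw [fpoly_sub HM a0 (k+1) le_rfl] at hdvd
  have hrest : (X - C a0) ^ (k + 1) ∣
      ∑ a ∈ P.erase a0, C (c a) * (Upoly lam k m a - Apoly lam k m (k+1) a a0) * (X - C a) ^ k := by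
    refine Finset.dvd_sum fun a ha => ?_
    have hane : a ≠ a0 := Finset.ne_of_mem_erase ha
    have haP : a ∈ P := Finset.mem_of_mem_erase ha
    have hs : ∀ i, i < k + 1 → (a * a0 + lam) ^ (k + m - i) = (a * a0 + lam) ^ (k - i) := by
      intro i hik
      have h1 : k + m - i = m + (k - i) := by omega
      rw [h1, pow_add, hs1 a haP hane, one_mul]
    have hdv := split_lemma lam k m a a0 (k+1) (by omega) le_rfl hs
    exact (hdv.mul_left (C (c a))).mul_right _
  have hsum : ∑ a ∈ P, C (c a) * (Upoly lam k m a - Apoly lam k m (k+1) a a0) * (X - C a) ^ k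
      = C (c a0) * (Upoly lam k m a0 - Apoly lam k m (k+1) a0 a0) * (X - C a0) ^ k
        + ∑ a ∈ P.erase a0,
            C (c a) * (Upoly lam k m a - Apoly lam k m (k+1) a a0) * (X - C a) ^ k :=
    (Finset.add_sum_erase _ _ ha0).symm
  rw [hsum] at hdvd
  have hdvdD : (X - C a0) ^ (k + 1) ∣
      C (c a0) * (Upoly lam k m a0 - Apoly lam k m (k+1) a0 a0) * (X - C a0) ^ k := by
    have := dvd_sub hdvd hrest
    simpa using this
  have hXne : (X - C a0 : F[X]) ≠ 0 := X_sub_C_ne_zero a0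
  have hcancel : (X - C a0) ∣ C (c a0) * (Upoly lam k m a0 - Apoly lam k m (k+1) a0 a0) := by
    have hpow : (X - C a0) ^ (k + 1) = (X - C a0) * (X - C a0) ^ k := by ring
    rw [hpow] at hdvdD
    exact (mul_dvd_mul_iff_right (pow_ne_zero k hXne)).mp hdvdD
  have hroot : (C (c a0) * (Upoly lam k m a0 - Apoly lam k m (k+1) a0 a0)).IsRoot a0 :=
    dvd_iff_isRoot.mp hcancel
  rw [IsRoot, eval_mul, eval_C, eval_sub] at hroot
  have hU : (Upoly lam k m a0).eval a0 = (a0 * a0 + lam) ^ (k + m) - (a0 * a0 + lam) ^ k := by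
    simp [Upoly]
  have hA : (Apoly lam k m (k+1) a0 a0).eval a0 = 0 := by
    rw [Apoly, eval_finset_sum]
    refine Finset.sum_eq_zero fun i hi => ?_
    simp only [eval_mul, eval_pow, eval_sub, eval_X, eval_C]
    rw [sub_self]
    rcases Nat.eq_zero_or_pos i with h0 | hpos
    · subst h0
      simp [Bcoef]
    · rw [zero_pow (by omega : i ≠ 0), mul_zero]
  rw [hU, hA, sub_zero] at hroot
  exact hcert hroot

end Engine

lemma fpoly_natDegree_le (lam : F) (k m : ℕ) (P : Finset F) (c : F → F) :
    (fpoly lam k m P c).natDegree ≤ m + 2 * k := by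
  rw [fpoly]
  refine natDegree_sum_le_of_forall_le _ _ fun a _ => ?_
  calc (C (c a) * Upoly lam k m a * (X - C a) ^ k).natDegree
      ≤ (C (c a) * Upoly lam k m a).natDegree + ((X - C a) ^ k).natDegree :=
        natDegree_mul_le
    _ ≤ ((C (c a)).natDegree + (Upoly lam k m a).natDegree) + k := by
        refine add_le_add natDegree_mul_le ?_
        refine natDegree_pow_le.trans ?_
        rw [natDegree_X_sub_C, mul_one]
    _ ≤ (0 + (k + m)) + k := by
        refine add_le_add (add_le_add (le_of_eq (natDegree_C _)) ?_) le_rfl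
        rw [Upoly]
        refine (natDegree_sub_le _ _).trans ?_
        have hbase : (C a * X + C lam : F[X]).natDegree ≤ 1 := by
          refine (natDegree_add_le _ _).trans ?_
          simp only [natDegree_C, max_le_iff]
          constructor
          · exact (natDegree_C_mul_le _ _).trans (by simp)
          · omega
        refine max_le ?_ ?_
        · exact natDegree_pow_le.trans (by nlinarith)
        · exact natDegree_pow_le.trans (by nlinarith)
    _ ≤ m + 2 * k := by omega

lemma prod_dvd_fpoly [DecidableEq F] (lam : F) (k m : ℕ) (P : Finset F) (c : F → F)
    (S : Finset F) (hdvd : ∀ b ∈ S, (X - C b) ^ k ∣ fpoly lam k m P c) :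
    (∏ b ∈ S, (X - C b) ^ k) ∣ fpoly lam k m P c := by
  refine Finset.prod_dvd_of_coprime ?_ hdvd
  intro b hb b' hb' hne
  have : IsCoprime (X - C b : F[X]) (X - C b') :=
    isCoprime_X_sub_C_of_isUnit_sub ((sub_ne_zero_of_ne hne).isUnit)
  exact (this.pow : IsCoprime _ _)

lemma prod_natDegree (k : ℕ) (S : Finset F) :
    (∏ b ∈ S, ((X : F[X]) - C b) ^ k).natDegree = S.card * k := by
  rw [natDegree_prod_of_monic _ _ (fun b _ => (monic_X_sub_C b).pow k)]
  simp [natDegree_X_sub_C]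

lemma exists_c [DecidableEq F] (k : ℕ) (P : Finset F) (a0 : F) (ha0 : a0 ∈ P)
    (hcard : P.card = 2 * k + 2) :
    ∃ c : F → F, (∀ x, x ∉ P → c x = 0) ∧
      (∀ t ≤ 2 * k, ∑ a ∈ P, c a * a ^ t = 0) ∧ c a0 ≠ 0 := by
  let φ : (↥P → F) →ₗ[F] (Fin (2 * k + 1) → F) :=
    { toFun := fun u t => ∑ a : ↥P, u a * (a : F) ^ (t : ℕ)
      map_add' := by
        intro u v
        funext t
        simp [add_mul, Finset.sum_add_distrib]
      map_smul' := by
        intro r u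
        funext t
        simp [Finset.mul_sum, mul_assoc] }
  have hnotinj : ¬ Function.Injective φ := by
    intro hinj
    have hle := LinearMap.finrank_le_finrank_of_injective hinj
    rw [Module.finrank_pi, Module.finrank_pi, Fintype.card_coe, Fintype.card_fin, hcard] at hle
    omega
  have hker : ∃ u : ↥P → F, u ≠ 0 ∧ φ u = 0 := by
    rw [← LinearMap.ker_eq_bot, Submodule.eq_bot_iff] at hnotinj
    push_neg at hnotinj
    obtain ⟨u, hu1, hu2⟩ := hnotinj
    exact ⟨u, hu2, hu1⟩
  obtain ⟨u, hune, hu0⟩ := hker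
  set c : F → F := fun x => if h : x ∈ P then u ⟨x, h⟩ else 0 with hc
  have hsupp : ∀ x, x ∉ P → c x = 0 := fun x hx => by simp [hc, hx]
  have hmem : ∀ (a : ↥P), c (a : F) = u a := fun a => by simp [hc, a.2]
  have hmom : ∀ t ≤ 2 * k, ∑ a ∈ P, c a * a ^ t = 0 := by
    intro t ht
    have h1 : ∑ a ∈ P, c a * a ^ t = ∑ a : ↥P, u a * (a : F) ^ t := by
      rw [← Finset.sum_attach P (fun a => c a * a ^ t), Finset.univ_eq_attach]
      exact Finset.sum_congr rfl fun a _ => by rw [hmem]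
    have h2 : ∑ a : ↥P, u a * (a : F) ^ t = 0 := by
      have := congrFun hu0 ⟨t, by omega⟩
      simpa [φ] using this
    rw [h1, h2]
  refine ⟨c, hsupp, hmom, ?_⟩
  intro hca0
  obtain ⟨a1, ha1⟩ : ∃ a1 : ↥P, u a1 ≠ 0 := by
    by_contra hall
    push_neg at hall
    exact hune (funext fun a => hall a)
  have hastar : (a1 : F) ≠ a0 := by
    intro heq
    apply ha1
    rw [← hmem a1, heq, hca0]
  set g : F[X] := ∏ x ∈ (P.erase a0).erase (a1 : F), (X - C x) with hg
  have hdeg : g.natDegree ≤ 2 * k := by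
    rw [hg, natDegree_prod_of_monic _ _ (fun x _ => monic_X_sub_C x)]
    simp only [natDegree_X_sub_C, Finset.sum_const, smul_eq_mul, mul_one]
    have h1 : (a1 : F) ∈ P.erase a0 := Finset.mem_erase.mpr ⟨hastar, a1.2⟩
    rw [Finset.card_erase_of_mem h1, Finset.card_erase_of_mem ha0, hcard]
    omega
  have hzero := scalar_lemma hmom g hdeg
  have hsingle : ∑ a ∈ P, c a * g.eval a = c (a1 : F) * g.eval (a1 : F) := by
    refine Finset.sum_eq_single _ (fun a haP hane => ?_) (fun h => absurd a1.2 h)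
    by_cases ha0' : a = a0
    · rw [ha0', hca0, zero_mul]
    · have hmem2 : a ∈ (P.erase a0).erase (a1 : F) :=
        Finset.mem_erase.mpr ⟨hane, Finset.mem_erase.mpr ⟨ha0', haP⟩⟩
      have : g.eval a = 0 := by
        rw [hg, eval_prod]
        exact Finset.prod_eq_zero hmem2 (by simp)
      rw [this, mul_zero]
  have hgne : g.eval (a1 : F) ≠ 0 := by
    rw [hg, eval_prod]
    rw [Finset.prod_ne_zero_iff]
    intro x hx
    simp only [eval_sub, eval_X, eval_C]
    exact sub_ne_zero_of_ne (fun heq => (Finset.ne_of_mem_erase hx) heq.symm)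
  rw [hsingle] at hzero
  have : c (a1 : F) = 0 := by
    rcases mul_eq_zero.mp hzero with h | h
    · exact h
    · exact absurd h hgne
  exact ha1 (by rw [← hmem a1, this])

lemma exists_dth_root {F : Type*} [Field F] [Fintype F]
    (d m : ℕ) (hm : 1 ≤ m) (hdm : d * m = Fintype.card F - 1)
    (T : F) (hT : T ≠ 0) (hTm : T ^ m = 1) : ∃ x : F, x ≠ 0 ∧ x ^ d = T := by
  classical
  set u : Fˣ := Units.mk0 T hT with hu
  obtain ⟨g, hg⟩ := IsCyclic.exists_generator (α := Fˣ)
  have hord : orderOf g = Fintype.card F - 1 := by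
    rw [orderOf_eq_card_of_forall_mem_zpowers hg, Nat.card_eq_fintype_card, Fintype.card_units]
  obtain ⟨n, hn⟩ : ∃ n : ℕ, g ^ n = u := by
    have := hg u
    rwa [← mem_powers_iff_mem_zpowers, Submonoid.mem_powers_iff] at this
  have hum : u ^ m = 1 := by
    ext
    push_cast [hu]
    exact hTm
  have hdvd : (d * m) ∣ n * m := by
    rw [hdm, ← hord]
    apply orderOf_dvd_of_pow_eq_one
    rw [pow_mul, hn]
    exact hum
  have hd : d ∣ n :=
    (Nat.mul_dvd_mul_iff_right (show 0 < m by omega)).mp hdvd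
  obtain ⟨e, he⟩ := hd
  refine ⟨((g ^ e : Fˣ) : F), Units.ne_zero _, ?_⟩
  rw [← Units.val_pow_eq_pow_val, ← pow_mul, mul_comm e d, ← he, hn, hu]
  rfl

end RestrictedProductAux

open RestrictedProductAux

/-- restricted product sets in shifted multiplicative subgroups. -/
theorem restricted_product_in_shifted_subgroup_bound
    (d : ℕ) (hd : 2 ≤ d) (F : Type*) [Field F] [Fintype F]
    (hq : Fintype.card F % d = 1)
    (lam : F) (hlam : lam ≠ 0)
    (A : Finset F) (hA0 : (0 : F) ∉ A)
    (hprop : ∀ a ∈ A, ∀ b ∈ A, a ≠ b →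
      a * b + lam = 0 ∨ ∃ x : F, x ≠ 0 ∧ x ^ d = a * b + lam)
    (hbad : ∃ a ∈ A, ¬ (a ^ 2 + lam = 0 ∨ ∃ x : F, x ≠ 0 ∧ x ^ d = a ^ 2 + lam)) :
    (A.card : ℝ) ≤ Real.sqrt (2 * ((Fintype.card F : ℝ) - 1) / d) + 4 := by
  classical
  set q := Fintype.card F with hqdef
  have hq2 : 2 ≤ q := Fintype.one_lt_card
  have hdvd : d ∣ q - 1 := by
    refine ⟨q / d, ?_⟩
    have := Nat.div_add_mod q d
    omega
  set m := (q - 1) / d with hmdef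
  have hdm : d * m = q - 1 := Nat.mul_div_cancel' hdvd
  have hm1 : 1 ≤ m := by
    rcases Nat.eq_zero_or_pos m with h0 | h
    · rw [h0, Nat.mul_zero] at hdm; omega
    · exact h
  -- the bad element
  obtain ⟨a0, ha0A, hbad0⟩ := hbad
  push_neg at hbad0
  obtain ⟨hT0ne, hT0nd⟩ := hbad0
  have ha0ne : a0 ≠ 0 := fun h => hA0 (h ▸ ha0A)
  have hT0ne' : a0 * a0 + lam ≠ 0 := by rwa [← sq]
  have hT0m : (a0 * a0 + lam) ^ m ≠ 1 := by
    intro h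
    obtain ⟨x, hx0, hxd⟩ := exists_dth_root d m hm1 hdm _ hT0ne' h
    exact (hT0nd x hx0) (by rw [hxd, sq])
  -- power facts
  have hSm1 : ∀ a b : F, a ∈ A → b ∈ A → a ≠ b → a * b + lam ≠ 0 →
      (a * b + lam) ^ m = 1 := by
    intro a b ha hb hab hne
    rcases hprop a ha b hb hab with h0 | ⟨x, hx0, hxd⟩
    · exact absurd h0 hne
    · rw [← hxd, ← pow_mul, hdm]
      exact FiniteField.pow_card_sub_one_eq_one x hx0
  have hSm : ∀ a b : F, a ∈ A → b ∈ A → a ≠ b →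
      (a * b + lam) ^ (m + 1) = a * b + lam := by
    intro a b ha hb hab
    by_cases hne : a * b + lam = 0
    · rw [hne, zero_pow (by omega : m + 1 ≠ 0)]
    · rw [pow_succ, hSm1 a b ha hb hab hne, one_mul]
  -- cast fact
  have hd0 : (d : ℝ) ≠ 0 := Nat.cast_ne_zero.mpr (by omega)
  have hcast : 2 * ((q : ℝ) - 1) / d = 2 * (m : ℝ) := by
    have h1 : ((q - 1 : ℕ) : ℝ) = (q : ℝ) - 1 := by
      rw [Nat.cast_sub (by omega : 1 ≤ q)]; norm_num
    have h2 : (q : ℝ) - 1 = (d : ℝ) * (m : ℝ) := by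
      rw [← h1, ← hdm]; push_cast; ring
    rw [h2]
    field_simp
  rw [hcast]
  set n := A.card with hndef
  have hsqrt1 : (1 : ℝ) ≤ Real.sqrt (2 * (m : ℝ)) := by
    apply Real.le_sqrt_of_sq_le
    have : (1 : ℝ) ≤ (m : ℝ) := by exact_mod_cast hm1
    nlinarith
  by_cases hn5 : n ≤ 5
  · have : (n : ℝ) ≤ 5 := by exact_mod_cast hn5
    linarith
  -- main case : n ≥ 6
  push_neg at hn5
  have hn6 : 6 ≤ n := hn5
  set k := (n - 3) / 2 with hkdef
  have hk1 : 1 ≤ k := by omega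
  have hk2 : 2 * k + 1 ≤ n - 2 := by omega
  have hk3 : n - 4 ≤ 2 * k := by omega
  -- the excluded point
  set w : F := -lam * a0⁻¹ with hwdef
  have hwprop : ∀ a : F, a * a0 + lam = 0 → a = w := by
    intro a h
    have h1 : a * a0 = -lam := by linear_combination h
    rw [hwdef, ← h1]
    field_simp
  -- choose the support
  set A2 := (A.erase a0).erase w with hA2def
  have hA2card : n - 2 ≤ A2.card := by
    have h1 : (A.erase a0).card = n - 1 := Finset.card_erase_of_mem ha0A
    have h2 := Finset.pred_card_le_card_erase (s := A.erase a0) (a := w)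
    rw [hA2def]
    omega
  obtain ⟨Q, hQsub, hQcard⟩ := Finset.exists_subset_card_eq (le_trans hk2 hA2card)
  have ha0Q : a0 ∉ Q := by
    intro h
    have := hQsub h
    rw [hA2def] at this
    exact (Finset.mem_erase.mp (Finset.mem_of_mem_erase this)).1 rfl
  set P := insert a0 Q with hPdef
  have hPcard : P.card = 2 * k + 2 := by
    rw [hPdef, Finset.card_insert_of_notMem ha0Q, hQcard]
  have hQA : Q ⊆ A := fun x hx =>
    Finset.mem_of_mem_erase (Finset.mem_of_mem_erase (hQsub hx))
  have hPA : P ⊆ A := by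
    rw [hPdef]
    exact Finset.insert_subset ha0A hQA
  obtain ⟨c, hcsupp, HM, hca0⟩ := exists_c k P a0 (Finset.mem_insert_self _ _) hPcard
  -- divisibility at each point of A \ {a0}
  have hE1 : ∀ b ∈ A.erase a0, (X - C b) ^ k ∣ fpoly lam k m P c := by
    intro b hb
    exact E1 HM hk1 b fun a haP hab =>
      hSm a b (hPA haP) (Finset.mem_of_mem_erase hb) hab
  -- nonvanishing
  have hE2 : ¬ (X - C a0) ^ (k + 1) ∣ fpoly lam k m P c := by
    refine E2 HM hk1 a0 (Finset.mem_insert_self _ _) ?_ ?_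
    · intro a haP hane
      have haQ : a ∈ Q := by
        rcases Finset.mem_insert.mp (hPdef ▸ haP) with h | h
        · exact absurd h hane
        · exact h
      have haA : a ∈ A := hQA haQ
      have hanw : a ≠ w := (Finset.mem_erase.mp (hQsub haQ)).1
      refine hSm1 a a0 haA ha0A hane ?_
      intro h0
      exact hanw (hwprop a h0)
    · have h2 : (a0 * a0 + lam) ^ (k + m) - (a0 * a0 + lam) ^ k ≠ 0 := by
        have heq : (a0 * a0 + lam) ^ (k + m) - (a0 * a0 + lam) ^ k
            = (a0 * a0 + lam) ^ k * ((a0 * a0 + lam) ^ m - 1) := by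
          rw [pow_add]; ring
        rw [heq]
        exact mul_ne_zero (pow_ne_zero _ hT0ne') (sub_ne_zero_of_ne hT0m)
      exact mul_ne_zero hca0 h2
  have hf0 : fpoly lam k m P c ≠ 0 := fun h => hE2 (h ▸ dvd_zero _)
  have hdvdprod := prod_dvd_fpoly lam k m P c (A.erase a0) hE1
  have hdeg1 := Polynomial.natDegree_le_of_dvd hdvdprod hf0
  rw [prod_natDegree, Finset.card_erase_of_mem ha0A] at hdeg1
  have hdeg2 := fpoly_natDegree_le lam k m P c
  have hcount : (n - 1) * k ≤ m + 2 * k := le_trans hdeg1 hdeg2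
  -- arithmetic
  have h1 : (n - 3) * k ≤ m := by
    have e1 : n - 1 = (n - 3) + 2 := by omega
    rw [e1, add_mul] at hcount
    omega
  have hfin : (n - 4) * (n - 3) ≤ 2 * m := by
    calc (n - 4) * (n - 3) ≤ (2 * k) * (n - 3) := Nat.mul_le_mul_right _ hk3
      _ = 2 * ((n - 3) * k) := by ring
      _ ≤ 2 * m := by omega
  have hfin2 : (n - 4) * (n - 4) ≤ 2 * m :=
    le_trans (Nat.mul_le_mul_left _ (by omega : n - 4 ≤ n - 3)) hfin
  have hcastn : ((n - 4 : ℕ) : ℝ) = (n : ℝ) - 4 := by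
    rw [Nat.cast_sub (by omega : 4 ≤ n)]; norm_num
  have hreal : ((n : ℝ) - 4) ^ 2 ≤ 2 * (m : ℝ) := by
    calc ((n : ℝ) - 4) ^ 2 = ((n - 4 : ℕ) : ℝ) * ((n - 4 : ℕ) : ℝ) := by
          rw [hcastn]; ring
      _ ≤ ((2 * m : ℕ) : ℝ) := by exact_mod_cast hfin2
      _ = 2 * (m : ℝ) := by push_cast; ring
  have := Real.le_sqrt_of_sq_le hreal
  linarith
end

section
/- Let q be a square prime power, d ≥ 2 a divisor of √q + 1, and suppose α ∈ F_q with α² a d-th power in F_q^*, and λ ∈ α²·F_{√q}^*. Then the set A = α·F_{√q}^* (of size √q − 1) satisfies: for all a, b ∈ A, ab + λ is 0 or a d-th power in F_q^*. -/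
lemma subfield_elt_is_pow
    (F : Type*) [Field F] [Fintype F] (K : Subfield F) [Fintype K]
    (hq : Fintype.card F = Fintype.card K ^ 2)
    (d : ℕ) (hd : 2 ≤ d) (hdvd : d ∣ Fintype.card K + 1)
    (w : K) (hw : w ≠ 0) : ∃ v : F, v ≠ 0 ∧ v ^ d = (w : F) := by
  classical
  set c := Fintype.card K with hc
  obtain ⟨t, ht⟩ := hdvd
  have hc2 : 2 ≤ c := Fintype.one_lt_card
  have ht1 : 1 ≤ t := by nlinarith
  have hw0 : (w : F) ≠ 0 := by simpa using hw
  have hwpow : (w : F) ^ (c - 1) = 1 := by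
    have h1 := FiniteField.pow_card_sub_one_eq_one w hw
    have h2 : ((w ^ (c - 1) : K) : F) = ((1 : K) : F) := by rw [h1]
    simpa using h2
  set W : Fˣ := Units.mk0 (w : F) hw0 with hW
  have hWpow : W ^ ((c - 1) * t) = 1 := by
    ext
    simp only [hW, Units.val_pow_eq_pow_val, Units.val_mk0, Units.val_one]
    rw [pow_mul, hwpow, one_pow]
  obtain ⟨g, hg⟩ := IsCyclic.exists_generator (α := Fˣ)
  have horder : orderOf g = (c - 1) * (d * t) := by
    rw [orderOf_eq_card_of_forall_mem_zpowers hg, Nat.card_eq_fintype_card, Fintype.card_units, hq, ← ht]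
    have h3 : c ^ 2 - 1 = (c - 1) * (c + 1) := by
      obtain ⟨m, hm⟩ : ∃ m, c = m + 2 := ⟨c - 2, by omega⟩
      rw [hm]
      have e1 : (m + 2) ^ 2 = m * m + 4 * m + 4 := by ring
      have e2 : (m + 2 - 1) * (m + 2 + 1) = m * m + 4 * m + 3 := by
        have : m + 2 - 1 = m + 1 := by omega
        rw [this]; ring
      omega
    rw [h3]
  obtain ⟨k, hk0⟩ := hg W
  have hk : g ^ k = W := hk0
  have hkey : g ^ (k * (((c - 1) * t : ℕ) : ℤ)) = 1 := by
    rw [zpow_mul, hk, zpow_natCast]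
    exact hWpow
  have hdvd2 : (orderOf g : ℤ) ∣ k * (((c - 1) * t : ℕ) : ℤ) :=
    orderOf_dvd_iff_zpow_eq_one.mpr hkey
  rw [horder] at hdvd2
  have hct : (((c - 1) * t : ℕ) : ℤ) ≠ 0 := by
    have : 0 < (c - 1) * t := Nat.mul_pos (by omega) (by omega)
    exact_mod_cast this.ne'
  have hdk : (d : ℤ) ∣ k := by
    have h4 : (d : ℤ) * (((c - 1) * t : ℕ) : ℤ) ∣ k * (((c - 1) * t : ℕ) : ℤ) := by
      refine dvd_trans (dvd_of_eq ?_) hdvd2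
      push_cast
      ring
    exact (mul_dvd_mul_iff_right hct).mp h4
  obtain ⟨j, hj⟩ := hdk
  refine ⟨((g ^ j : Fˣ) : F), Units.ne_zero _, ?_⟩
  have h5 : (g ^ j) ^ d = W := by
    rw [← zpow_natCast (g ^ j), ← zpow_mul, mul_comm, ← hj, hk]
  calc ((g ^ j : Fˣ) : F) ^ d = (((g ^ j) ^ d : Fˣ) : F) := by push_cast; ring
    _ = (w : F) := by rw [h5]; rfl

/-- the algebraic construction `α·F_{√q}^*` is a strong Diophantine tuple. -/
theorem subfield_coset_strong_diophantine
    (F : Type*) [Field F] [Fintype F] (K : Subfield F) [Fintype K]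
    (hq : Fintype.card F = Fintype.card K ^ 2)
    (d : ℕ) (hd : 2 ≤ d) (hdvd : d ∣ Fintype.card K + 1)
    (α : F) (hα : ∃ z : F, z ≠ 0 ∧ z ^ d = α ^ 2)
    (lam : F) (hlam : ∃ u : K, u ≠ 0 ∧ lam = α ^ 2 * (u : F)) :
    ∀ x y : K, x ≠ 0 → y ≠ 0 →
      (α * (x : F)) * (α * (y : F)) + lam = 0 ∨
        ∃ z : F, z ≠ 0 ∧ z ^ d = (α * (x : F)) * (α * (y : F)) + lam := by
  intro x y hx hy
  obtain ⟨z, hz, hzd⟩ := hα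
  obtain ⟨u, hu, rfl⟩ := hlam
  have key : (α * (x : F)) * (α * (y : F)) + α ^ 2 * (u : F)
      = α ^ 2 * (((x * y + u : K) : F)) := by push_cast; ring
  by_cases h0 : x * y + u = 0
  · left
    rw [key, h0]
    simp
  · right
    obtain ⟨v, hv, hvd⟩ := subfield_elt_is_pow F K hq d hd hdvd (x * y + u) h0
    exact ⟨z * v, mul_ne_zero hz hv, by rw [mul_pow, hzd, hvd, key]⟩
end

section
/- Let p_1 < p_2 < ⋯ be the primes in increasing order, P_ℓ = p_1 p_2 ⋯ p_ℓ, and define sets I_ℓ ⊆ ℕ recursively by I_1 = {1} and I_{ℓ+1} = { i + j·P_ℓ : i ∈ I_ℓ, 0 ≤ j < p_{ℓ+1}, p_{ℓ+1} ∤ (i + j·P_ℓ) }. Define T_ℓ = ∑_{y ∈ I_ℓ} √(gcd(y−1, P_ℓ)). Then for every ℓ ≥ 1: (a) |I_{ℓ+1}| = |I_ℓ|·(p_{ℓ+1} − 1), and (b) T_{ℓ+1} = T_ℓ·(p_{ℓ+1} − 2 + √(p_{ℓ+1})). -/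
open Finset

/-- `nthPrime ℓ` is the (ℓ+1)-st prime, i.e. `p_{ℓ+1}` in the paper's notation. -/
noncomputable def nthPrime (ℓ : ℕ) : ℕ := Nat.nth Nat.Prime ℓ

/-- `primorial ℓ = P_ℓ`, the product of the first `ℓ` primes. -/
noncomputable def primorialP (ℓ : ℕ) : ℕ := ∏ i ∈ Finset.range ℓ, nthPrime i

/-- `Iset n` is the set `I_{n+1}` of the paper: `I_1 = {1}` and
`I_{ℓ+1} = { i + j P_ℓ : i ∈ I_ℓ, 0 ≤ j < p_{ℓ+1}, p_{ℓ+1} ∤ (i + j P_ℓ) }`. -/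
noncomputable def Iset : ℕ → Finset ℕ
  | 0 => {1}
  | n + 1 =>
    ((Iset n ×ˢ Finset.range (nthPrime (n + 1))).image
        (fun q => q.1 + q.2 * primorialP (n + 1))).filter
      (fun x => ¬ nthPrime (n + 1) ∣ x)

/-- `Tsum n` is `T_{n+1}` of the paper: `T_ℓ = ∑_{y ∈ I_ℓ} √(gcd(y−1, P_ℓ))`. -/
noncomputable def Tsum (n : ℕ) : ℝ :=
  ∑ y ∈ Iset n, Real.sqrt (Nat.gcd (y - 1) (primorialP (n + 1)))

/-! Fix `i ∈ I_ℓ` and write `P = P_ℓ`, `p = p_{ℓ+1}`. As `gcd(P, p) = 1`, the lifts `i + jP`,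
`0 ≤ j < p`, run through every residue class mod `p` exactly once, and they are pairwise distinct
because `1 ≤ i ≤ P`. The class `0` is discarded; for the others
`gcd(y - 1, P p) = gcd(i - 1, P) · gcd(y - 1, p)`, where the last factor is `p` for the class `1`
and `1` for the remaining `p - 2` classes. So each `i` has `p - 1` lifts, which contribute
`√gcd(i - 1, P) · (p - 2 + √p)` to `T_{ℓ+1}`. -/

lemma nthPrime_prime (ℓ : ℕ) : (nthPrime ℓ).Prime := Nat.prime_nth_prime ℓ

lemma primorialP_pos (ℓ : ℕ) : 0 < primorialP ℓ :=
  prod_pos fun i _ => (nthPrime_prime i).pos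

lemma primorialP_succ (ℓ : ℕ) : primorialP (ℓ + 1) = primorialP ℓ * nthPrime ℓ :=
  prod_range_succ _ _

lemma coprime_primorialP_nthPrime (ℓ : ℕ) : (primorialP ℓ).Coprime (nthPrime ℓ) := by
  refine Nat.Coprime.prod_left fun i hi => ?_
  rw [Nat.coprime_primes (nthPrime_prime i) (nthPrime_prime ℓ)]
  exact (Nat.nth_strictMono Nat.infinite_setOfPred_prime (mem_range.1 hi)).ne

lemma Iset_subset_Icc (n : ℕ) : Iset n ⊆ Icc 1 (primorialP (n + 1)) := by
  induction n with
  | zero => simpa [Iset, Nat.one_le_iff_ne_zero] using (primorialP_pos 1).ne'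
  | succ n ih =>
    intro y hy
    simp only [Iset, mem_filter, mem_image, mem_product, mem_range, Prod.exists] at hy
    obtain ⟨⟨i, j, ⟨hi, hj⟩, rfl⟩, -⟩ := hy
    obtain ⟨hi1, hiP⟩ := mem_Icc.1 (ih hi)
    rw [mem_Icc, primorialP_succ (n + 1)]
    exact ⟨by omega, by nlinarith⟩

lemma injOn_add_mul_of_mem_Icc (P : ℕ) :
    Set.InjOn (fun q : ℕ × ℕ => q.1 + q.2 * P) {q | q.1 ∈ Icc 1 P} := by
  rintro ⟨i, j⟩ hi ⟨i', j'⟩ hi' h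
  simp only [Set.mem_ofPred_eq, mem_Icc] at hi hi' h
  have hP : 0 < P := by omega
  have key : (i - 1) + j * P = (i' - 1) + j' * P := by omega
  have hmod := congrArg (· % P) key
  have hdiv := congrArg (· / P) key
  simp only [Nat.add_mul_mod_self_right, Nat.add_mul_div_right _ _ hP,
    Nat.mod_eq_of_lt (by omega : i - 1 < P), Nat.mod_eq_of_lt (by omega : i' - 1 < P),
    Nat.div_eq_of_lt (by omega : i - 1 < P), Nat.div_eq_of_lt (by omega : i' - 1 < P)] at hmod hdiv
  ext <;> simp only <;> omega

lemma sum_Iset_succ {M : Type*} [AddCommMonoid M] (n : ℕ) (g : ℕ → M) :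
    ∑ y ∈ Iset (n + 1), g y =
      ∑ i ∈ Iset n, ∑ j ∈ range (nthPrime (n + 1)),
        if ¬ nthPrime (n + 1) ∣ i + j * primorialP (n + 1)
        then g (i + j * primorialP (n + 1)) else 0 := by
  rw [Iset, filter_image, sum_image, sum_filter, sum_product]
  intro q hq q' hq'
  exact injOn_add_mul_of_mem_Icc _ (Iset_subset_Icc n (mem_product.1 (mem_filter.1 hq).1).1)
    (Iset_subset_Icc n (mem_product.1 (mem_filter.1 hq').1).1)

lemma sum_range_comp_natCast_add_mul {M : Type*} [AddCommMonoid M] {p P : ℕ} [NeZero p]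
    (hP : P.Coprime p) (i : ℕ) (F : ZMod p → M) :
    ∑ j ∈ range p, F ((i + j * P : ℕ) : ZMod p) = ∑ t, F t := by
  have hcast : ∑ j ∈ range p, F ((i + j * P : ℕ) : ZMod p) = ∑ t : ZMod p, F (i + t * P) :=
    sum_nbij' (fun j => (j : ZMod p)) ZMod.val (by simp) (by simp [ZMod.val_lt])
      (fun j hj => ZMod.val_cast_of_lt (mem_range.1 hj)) (fun t _ => ZMod.natCast_zmod_val t)
      (by simp)
  rw [hcast]
  exact Fintype.sum_equiv ((ZMod.unitOfCoprime P hP).mulRight.trans (Equiv.addLeft (i : ZMod p)))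
    _ _ (fun t => by simp)

lemma gcd_mul_prime (x : ℕ) {p P : ℕ} (hp : p.Prime) (hP : P.Coprime p) :
    x.gcd (P * p) = x.gcd P * if p ∣ x then p else 1 := by
  rw [Nat.Coprime.gcd_mul x hP]
  split_ifs with h
  · rw [Nat.gcd_eq_right h]
  · rw [Nat.Coprime.gcd_eq_one (Nat.coprime_comm.1 (hp.coprime_iff_not_dvd.2 h))]

/-- For `y ≡ t (mod p)`: `y` is discarded when `t = 0`, and `p` divides `gcd(y - 1, P p)` exactly
when `t = 1`. -/
noncomputable def sqrtGcdWeight (p : ℕ) (t : ZMod p) : ℝ :=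
  if t = 0 then 0 else if t = 1 then √p else 1

lemma sum_sqrtGcdWeight (p : ℕ) [Fact p.Prime] :
    ∑ t : ZMod p, sqrtGcdWeight p t = p - 2 + √p := by
  have hsplit : ∀ t : ZMod p, sqrtGcdWeight p t =
      (1 - if t = 0 then 1 else 0) + if t = 1 then √p - 1 else 0 := by
    intro t
    unfold sqrtGcdWeight
    split_ifs with h0 h1 <;> simp_all
  simp only [hsplit, sum_add_distrib, sum_sub_distrib, sum_ite_eq', mem_univ, if_true, sum_const,
    card_univ, ZMod.card, nsmul_eq_mul, mul_one]
  ring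

lemma sqrt_gcd_mul_prime {p P y : ℕ} (hp : p.Prime) (hP : P.Coprime p) (hy : 1 ≤ y) :
    (if ¬ p ∣ y then √((y - 1).gcd (P * p) : ℕ) else 0) =
      √((y - 1).gcd P : ℕ) * sqrtGcdWeight p y := by
  obtain ⟨x, rfl⟩ := Nat.exists_eq_add_of_le' hy
  have h0 : ((x + 1 : ℕ) : ZMod p) = 0 ↔ p ∣ x + 1 := ZMod.natCast_eq_zero_iff _ _
  have h1 : ((x + 1 : ℕ) : ZMod p) = 1 ↔ p ∣ x := by
    rw [Nat.cast_succ, add_eq_right, ZMod.natCast_eq_zero_iff]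
  simp only [Nat.add_sub_cancel, sqrtGcdWeight, gcd_mul_prime _ hp hP, h0, h1]
  split_ifs <;> simp_all [Real.sqrt_mul]

lemma sum_range_boole_not_dvd_add_mul {p P : ℕ} [NeZero p] (hP : P.Coprime p) (i : ℕ) :
    ∑ j ∈ range p, (if ¬ p ∣ i + j * P then 1 else 0) = p - 1 := by
  simp only [← ZMod.natCast_eq_zero_iff, ite_not]
  rw [sum_range_comp_natCast_add_mul hP i (fun t => if t = 0 then 0 else 1)]
  simp [sum_ite, filter_ne', ZMod.card]

lemma sum_range_sqrt_gcd_add_mul {p P : ℕ} [Fact p.Prime] (hP : P.Coprime p) {i : ℕ} (hi : 1 ≤ i) :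
    ∑ j ∈ range p, (if ¬ p ∣ i + j * P then √((i + j * P - 1).gcd (P * p) : ℕ) else 0) =
      √((i - 1).gcd P : ℕ) * (p - 2 + √p) := by
  have hgcd : ∀ j, (i + j * P - 1).gcd P = (i - 1).gcd P := fun j => by
    rw [← Nat.gcd_add_mul_right_left P (i - 1) j]
    congr 1
    omega
  rw [sum_congr rfl fun j _ => sqrt_gcd_mul_prime Fact.out hP (by omega : 1 ≤ i + j * P)]
  simp only [hgcd, ← mul_sum]
  rw [sum_range_comp_natCast_add_mul hP i, sum_sqrtGcdWeight]

/-- recurrences for `|I_ℓ|` and `T_ℓ` (here `ℓ = n + 1 ≥ 1`). -/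
theorem Iset_card_and_Tsum_recurrence (n : ℕ) :
    (Iset (n + 1)).card = (Iset n).card * (nthPrime (n + 1) - 1) ∧
    Tsum (n + 1) =
      Tsum n * ((nthPrime (n + 1) : ℝ) - 2 + Real.sqrt (nthPrime (n + 1))) := by
  have := Fact.mk (nthPrime_prime (n + 1))
  have hP := coprime_primorialP_nthPrime (n + 1)
  constructor
  · rw [card_eq_sum_ones, sum_Iset_succ, sum_congr rfl fun i _ => sum_range_boole_not_dvd_add_mul hP i, sum_const,
      smul_eq_mul]
  · rw [Tsum, sum_Iset_succ, primorialP_succ (n + 1), Tsum, sum_mul]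
    exact sum_congr rfl fun i hi =>
      sum_range_sqrt_gcd_add_mul hP (mem_Icc.1 (Iset_subset_Icc n hi)).1
end

section
/- Let A, B, C be nonempty finite subsets of F_q and λ ∈ F_q^*. Then |ABC + λ|² ≤ |AB + λ| · |BC + λ| · |CA + λ|, where for sets X, Y one writes XY = {xy : x∈X, y∈Y} and X + λ = {x + λ : x ∈ X}. -/
/-!
Induction on `C`. Adding `x` to `C` enlarges `ABC`, `BC`, `AC` by `D = ABx \ ABC`,
`E = Bx \ BC`, `E' = Ax \ AC`. Always `|D| ≤ |AB|`, and `|D| ≤ |E| |E'|`: for regular `x` since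
`d ↦ dx` embeds `D` into `E E'`, for `x = 0` since `D ⊆ {0}` and `0 ∈ D` forces `0 ∈ E, E'`.
AM–GM then turns the induction hypothesis `|ABC|² ≤ |AB| |BC| |AC|` into
`(|D| + |ABC|)² ≤ |AB| (|E| + |BC|) (|E'| + |AC|)`.
Translation by `λ` changes no cardinality.
-/

open Finset
open scoped Pointwise

theorem add_sq_le_mul_add_mul_add {s d x y z e f : ℕ} (hs : s ^ 2 ≤ x * y * z) (hdx : d ≤ x)
    (hdef : d ≤ e * f) : (d + s) ^ 2 ≤ x * (e + y) * (f + z) := by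
  have hd : d ^ 2 ≤ x * (e * f) := by nlinarith
  have key : (2 * (s * d)) ^ 2 ≤ (x * (y * f) + x * (e * z)) ^ 2 := by
    nlinarith [two_mul_le_add_sq (x * (y * f)) (x * (e * z)), Nat.mul_le_mul hs hd]
  nlinarith [Nat.pow_le_pow_iff_left (n := 2) two_ne_zero |>.1 key]

namespace Finset

variable {M : Type*} [DecidableEq M]

lemma card_mul_mul_insert_sq_le [CommMonoid M] {A B C : Finset M} {x : M}
    (ih : #(A * B * C) ^ 2 ≤ #(A * B) * #(B * C) * #(A * C))
    (hx : #((A * B * {x}) \ (A * B * C)) ≤ #((B * {x}) \ (B * C)) * #((A * {x}) \ (A * C))) :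
    #(A * B * insert x C) ^ 2 ≤ #(A * B) * #(B * insert x C) * #(A * insert x C) := by
  simp only [insert_eq, mul_union, ← card_sdiff_add_card _ (_ * C)]
  exact add_sq_le_mul_add_mul_add ih
    ((card_le_card sdiff_subset).trans (card_mul_le.trans (by simp))) hx

lemma card_sdiff_mul_singleton_le_of_isRightRegular [CommMonoid M] {A B C : Finset M} {x : M}
    (hx : IsRightRegular x) :
    #((A * B * {x}) \ (A * B * C)) ≤ #((B * {x}) \ (B * C)) * #((A * {x}) \ (A * C)) := by
  have hsub : ((A * B * {x}) \ (A * B * C)).image (· * x) ⊆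
      ((B * {x}) \ (B * C)) * ((A * {x}) \ (A * C)) := by
    intro w hw
    obtain ⟨d, hd, rfl⟩ := mem_image.1 hw
    obtain ⟨hd, habx⟩ := mem_sdiff.1 hd
    simp only [mem_mul, mem_singleton, exists_eq_left] at hd
    obtain ⟨_, ⟨a, ha, b, hb, rfl⟩, rfl⟩ := hd
    refine mem_mul.2 ⟨b * x, mem_sdiff.2 ⟨mul_mem_mul hb (mem_singleton_self x), ?_⟩,
      a * x, mem_sdiff.2 ⟨mul_mem_mul ha (mem_singleton_self x), ?_⟩, by ac_rfl⟩
    · intro hbC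
      obtain ⟨b', hb', c, hc, hbc⟩ := mem_mul.1 hbC
      have : a * b' * c = a * b * x := by rw [mul_assoc, hbc, mul_assoc]
      exact habx (this ▸ mul_mem_mul (mul_mem_mul ha hb') hc)
    · intro haC
      obtain ⟨a', ha', c, hc, hac⟩ := mem_mul.1 haC
      have : a' * b * c = a * b * x := by rw [mul_right_comm, hac, mul_right_comm]
      exact habx (this ▸ mul_mem_mul (mul_mem_mul ha' hb) hc)
  calc _ = #(((A * B * {x}) \ (A * B * C)).image (· * x)) := (card_image_of_injective _ hx).symm
    _ ≤ _ := (card_le_card hsub).trans card_mul_le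

lemma card_sdiff_mul_singleton_zero_le [CommMonoidWithZero M] {A B C : Finset M} :
    #((A * B * {0}) \ (A * B * C)) ≤ #((B * {0}) \ (B * C)) * #((A * {0}) \ (A * C)) := by
  have mem_mul_zero {S : Finset M} {u : M} (hu : u ∈ S * {0}) : u = 0 := by
    obtain ⟨y, -, z, hz, rfl⟩ := mem_mul.1 hu
    rw [mem_singleton.1 hz, mul_zero]
  obtain hD | ⟨d, hd⟩ := ((A * B * {0}) \ (A * B * C)).eq_empty_or_nonempty
  · simp [hD]
  obtain ⟨hd, habc⟩ := mem_sdiff.1 hd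
  rw [mem_mul_zero hd] at habc
  obtain ⟨_, hab, -⟩ := mem_mul.1 hd
  obtain ⟨a, ha, b, hb, -⟩ := mem_mul.1 hab
  have hB0 : (0 : M) ∈ (B * {0}) \ (B * C) := by
    refine mem_sdiff.2 ⟨mem_mul.2 ⟨b, hb, 0, mem_singleton_self 0, mul_zero b⟩, fun hBC => habc ?_⟩
    obtain ⟨b', hb', c, hc, hbc⟩ := mem_mul.1 hBC
    exact mem_mul.2 ⟨a * b', mul_mem_mul ha hb', c, hc, by rw [mul_assoc, hbc, mul_zero]⟩
  have hA0 : (0 : M) ∈ (A * {0}) \ (A * C) := by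
    refine mem_sdiff.2 ⟨mem_mul.2 ⟨a, ha, 0, mem_singleton_self 0, mul_zero a⟩, fun hAC => habc ?_⟩
    obtain ⟨a', ha', c, hc, hac⟩ := mem_mul.1 hAC
    exact mem_mul.2 ⟨a' * b, mul_mem_mul ha' hb, c, hc, by rw [mul_right_comm, hac, zero_mul]⟩
  calc #((A * B * {0}) \ (A * B * C)) ≤ 1 * 1 := card_le_one.2 fun u hu v hv =>
        (mem_mul_zero (sdiff_subset hu)).trans (mem_mul_zero (sdiff_subset hv)).symm
    _ ≤ _ := Nat.mul_le_mul (card_pos.2 ⟨0, hB0⟩) (card_pos.2 ⟨0, hA0⟩)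

theorem card_mul_mul_sq_le [CommMonoidWithZero M] [IsCancelMulZero M] (A B C : Finset M) :
    #(A * B * C) ^ 2 ≤ #(A * B) * #(B * C) * #(C * A) := by
  rw [mul_comm C]
  induction C using Finset.induction_on with
  | empty => simp
  | insert x C _ ih =>
    refine card_mul_mul_insert_sq_le ih ?_
    obtain rfl | hx := eq_or_ne x 0
    · exact card_sdiff_mul_singleton_zero_le
    · exact card_sdiff_mul_singleton_le_of_isRightRegular (IsRegular.of_ne_zero hx).right

end Finset

theorem shifted_triple_product_inequality_general
    (F : Type*) [Field F] [DecidableEq F]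
    (A B C : Finset F)
    (lam : F) :
    ((Finset.image₂ (· * ·) (Finset.image₂ (· * ·) A B) C).image (· + lam)).card ^ 2 ≤
      ((Finset.image₂ (· * ·) A B).image (· + lam)).card *
        ((Finset.image₂ (· * ·) B C).image (· + lam)).card *
        ((Finset.image₂ (· * ·) C A).image (· + lam)).card := by
  simp only [card_image_of_injective _ (add_left_injective lam)]
  exact card_mul_mul_sq_le A B C

/-- Gyarmati–Matolcsi–Ruzsa type inequality for shifted triple products. -/
theorem shifted_triple_product_inequality
    (F : Type*) [Field F] [Fintype F] [DecidableEq F]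
    (A B C : Finset F) (hA : A.Nonempty) (hB : B.Nonempty) (hC : C.Nonempty)
    (lam : F) (hlam : lam ≠ 0) :
    ((Finset.image₂ (· * ·) (Finset.image₂ (· * ·) A B) C).image (· + lam)).card ^ 2 ≤
      ((Finset.image₂ (· * ·) A B).image (· + lam)).card *
        ((Finset.image₂ (· * ·) B C).image (· + lam)).card *
        ((Finset.image₂ (· * ·) C A).image (· + lam)).card :=
  shifted_triple_product_inequality_general F A B C lam
end

section
/- Let k be an even positive integer and n a positive integer. If A is a finite set of distinct positive integers such that a·b + n is a perfect k-th power for all a, b ∈ A (including a = b), then |A| ≤ τ(n), the number of positive divisors of n; moreover every element of A is at most n. -/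
/-!
For even `k`, the condition at `a = b` makes `a * a + n = y * y` a perfect square, so
`n = (y - a) * (y + a)`. Since `n > 0`, the factor `y - a` is a positive divisor of `n`, and it
determines `a` because `n = d * (d + 2 * a)` for `d = y - a`. This injects `A` into the divisors
of `n`, and `a < y + a ≤ n` bounds the elements.
-/

/-- The positive `d` with `a * a + n = (a + d) * (a + d)`, whenever `a * a + n` is a square. -/
def squareGap (n a : ℕ) : ℕ := Nat.sqrt (a * a + n) - a

section SquareGap

variable {n a : ℕ}

lemma squareGap_pos (hn : n ≠ 0) (h : IsSquare (a * a + n)) : 0 < squareGap n a := by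
  obtain ⟨y, hy⟩ := h
  have hay : a * a < y * y := hy ▸ by omega
  rw [squareGap, hy, Nat.sqrt_eq]
  exact Nat.sub_pos_of_lt (Nat.mul_self_lt_mul_self_iff.1 hay)

lemma squareGap_mul_squareGap_add (h : IsSquare (a * a + n)) :
    squareGap n a * (squareGap n a + 2 * a) = n := by
  obtain ⟨y, hy⟩ := h
  have hay : a ≤ y := Nat.mul_self_le_mul_self_iff.1 (hy ▸ Nat.le_add_right _ _)
  obtain ⟨d, rfl⟩ := Nat.exists_eq_add_of_le hay
  rw [squareGap, hy, Nat.sqrt_eq, Nat.add_sub_cancel_left]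
  linarith

lemma squareGap_mem_divisors (hn : n ≠ 0) (h : IsSquare (a * a + n)) :
    squareGap n a ∈ n.divisors :=
  Nat.mem_divisors.2 ⟨Dvd.intro _ (squareGap_mul_squareGap_add h), hn⟩

lemma le_of_isSquare_mul_self_add (hn : n ≠ 0) (h : IsSquare (a * a + n)) : a ≤ n := by
  have hd := squareGap_pos hn h
  have hdn := squareGap_mul_squareGap_add h
  nlinarith

lemma squareGap_injOn (hn : n ≠ 0) : Set.InjOn (squareGap n) {a | IsSquare (a * a + n)} := by
  intro a ha b hb hab
  have hd := squareGap_pos hn ha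
  have hprod := (squareGap_mul_squareGap_add ha).trans (squareGap_mul_squareGap_add hb).symm
  rw [hab] at hprod hd
  have := Nat.eq_of_mul_eq_mul_left hd hprod
  omega

lemma card_le_card_divisors_of_isSquare (hn : n ≠ 0) {A : Finset ℕ}
    (hA : ∀ a ∈ A, IsSquare (a * a + n)) : A.card ≤ n.divisors.card :=
  Finset.card_le_card_of_injOn (squareGap n) (fun a ha => squareGap_mem_divisors hn (hA a ha))
    ((squareGap_injOn hn).mono fun a ha => hA a ha)

end SquareGap

theorem strong_diophantine_even_k_divisor_bound_general
    (k n : ℕ) (hkeven : Even k) (hn : 0 < n)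
    (A : Finset ℕ)
    (hprop : ∀ a ∈ A, ∀ b ∈ A, ∃ y : ℕ, a * b + n = y ^ k) :
    A.card ≤ n.divisors.card ∧ ∀ a ∈ A, a ≤ n := by
  have hsq : ∀ a ∈ A, IsSquare (a * a + n) := fun a ha => by
    obtain ⟨y, hy⟩ := hprop a ha a ha
    exact hy ▸ hkeven.isSquare_pow y
  exact ⟨card_le_card_divisors_of_isSquare hn.ne' hsq,
    fun a ha => le_of_isSquare_mul_self_add hn.ne' (hsq a ha)⟩

/-- strong Diophantine tuples with property `SD_k(n)` for even `k`
have size at most `τ(n)`, and all elements are at most `n`. -/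
theorem strong_diophantine_even_k_divisor_bound
    (k n : ℕ) (hk : 0 < k) (hkeven : Even k) (hn : 0 < n)
    (A : Finset ℕ) (hpos : ∀ a ∈ A, 0 < a)
    (hprop : ∀ a ∈ A, ∀ b ∈ A, ∃ y : ℕ, a * b + n = y ^ k) :
    A.card ≤ n.divisors.card ∧ ∀ a ∈ A, a ≤ n :=
  strong_diophantine_even_k_divisor_bound_general k n hkeven hn A hprop
end
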